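/- arXiv:1408.2807 — 5 statements merged into one kernel-verified Lean document; each statement's English description precedes it below -/
import Mathlib

section
/- For any partition λ and positive integers k, n, the rectangular Schur polynomials satisfy the bilinear identity s_{(k^n)} · s_{(k^n)} = s_{((k+1)^n)} · s_{((k-1)^n)} + s_{(k^{n+1})} · s_{(k^{n-1})}, where (k^n) denotes the partition with n parts all equal to k. -/
open MvPolynomial

/-- The images of the variables in the field of fractions of the polynomial ring. -/
noncomputable def Xfrac (N : ℕ) (j : Fin N) : FractionRing (MvPolynomial (Fin N) ℚ) :=
  algebraMap (MvPolynomial (Fin N) ℚ) (FractionRing (MvPolynomial (Fin N) ℚ)) (X j)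

/-- The Schur polynomial of a partition `lam` (given as a function `ℕ → ℕ`, padded with zeros)
in `N` variables, via the bialternant formula
`s_lam = det(x_j ^ (lam_i + N - i)) / det(x_j ^ (N - i))`. -/
noncomputable def schurDet (N : ℕ) (lam : ℕ → ℕ) : FractionRing (MvPolynomial (Fin N) ℚ) :=
  Matrix.det (Matrix.of fun i j : Fin N => Xfrac N j ^ (lam i + (N - 1 - (i : ℕ)))) /
    Matrix.det (Matrix.of fun i j : Fin N => Xfrac N j ^ (N - 1 - (i : ℕ)))

/-- The rectangular partition `(k^n)`: `n` parts all equal to `k`. -/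
def rectPart (k n : ℕ) (i : ℕ) : ℕ := if i < n then k else 0

/-!
The identity ∏_{i ≠ j} (1 - xᵢ t) · ∏ᵢ 1 / (1 - xᵢ t) = 1 / (1 - xⱼ t) factors the alternant
`(xⱼ ^ (λᵢ + N - 1 - i))` as the Jacobi–Trudi matrix `(h_{λᵢ - i + j})` times a matrix of signed
elementary symmetric polynomials that does not depend on `λ`; hence `s_λ = det (h_{λᵢ - i + j})`.
For the rectangle `(k^n)` this is the Toeplitz matrix `T_n(k) = (h_{k - i + j})_{i,j < n}`, and
deleting the first and/or last row and column of `T_{n+1}(k)` gives `T_n(k)`, `T_n(k ± 1)` and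
`T_{n-1}(k)`.
The bilinear identity is therefore the Desnanot–Jacobi identity for `T_{n+1}(k)`.
-/

open Finset
open scoped Polynomial PowerSeries

namespace Matrix

variable {R : Type*} [CommRing R] {m n : Type*} [Fintype m] [Fintype n] [DecidableEq m]
  [DecidableEq n]

/- Multiplying `M` by the matrix that agrees with `adjugate M` on the first block column and with
`1` on the second one gives `fromBlocks (det M • 1) M₁₂ 0 M₂₂`. -/
theorem det_toBlocks₁₁_adjugate_of_isRegular [Nonempty m] (M : Matrix (m ⊕ n) (m ⊕ n) R)
    (hM : IsRegular M.det) :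
    (adjugate M).toBlocks₁₁.det = M.det ^ (Fintype.card m - 1) * M.toBlocks₂₂.det := by
  set A := adjugate M
  have hMA : M * A = fromBlocks (M.det • 1) 0 0 (M.det • 1) := by
    rw [mul_adjugate, ← fromBlocks_one, fromBlocks_smul, smul_zero, smul_zero]
  conv_lhs at hMA => rw [← fromBlocks_toBlocks M, ← fromBlocks_toBlocks A, fromBlocks_multiply]
  obtain ⟨hA₁₁, -, hA₂₁, -⟩ := fromBlocks_inj.mp hMA
  have hMC : M * fromBlocks A.toBlocks₁₁ 0 A.toBlocks₂₁ 1 =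
      fromBlocks (M.det • 1) M.toBlocks₁₂ 0 M.toBlocks₂₂ := by
    conv_lhs => rw [← fromBlocks_toBlocks M]
    rw [fromBlocks_multiply, hA₁₁, hA₂₁]
    simp
  have hcard : M.det ^ Fintype.card m = M.det * M.det ^ (Fintype.card m - 1) := by
    rw [← pow_succ', Nat.sub_add_cancel Fintype.card_pos]
  apply hM.left
  simpa [det_fromBlocks_zero₁₂, det_fromBlocks_zero₂₁, det_smul, hcard, mul_assoc] using
    congrArg det hMC

/- `M + t • 1` has a monic, hence regular, determinant, and specialises to `M` at `t = 0`. -/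
theorem det_toBlocks₁₁_adjugate [Nonempty m] (M : Matrix (m ⊕ n) (m ⊕ n) R) :
    (adjugate M).toBlocks₁₁.det = M.det ^ (Fintype.card m - 1) * M.toBlocks₂₂.det := by
  set M' := M.map Polynomial.C + (Polynomial.X : R[X]) • (1 : Matrix (m ⊕ n) (m ⊕ n) R[X])
  have hM' : (Polynomial.evalRingHom 0).mapMatrix M' = M := by ext; simp [M']
  have hreg : IsRegular M'.det := by
    refine Polynomial.Monic.isRegular ?_
    simp only [M', Polynomial.Monic.def, ← Polynomial.leadingCoeff_det_X_one_add_C M, add_comm]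
  have h := congrArg (Polynomial.evalRingHom 0) (det_toBlocks₁₁_adjugate_of_isRegular M' hreg)
  rw [map_mul, map_pow, RingHom.map_det, RingHom.map_det, RingHom.map_det] at h
  rwa [show (Polynomial.evalRingHom 0).mapMatrix M'.adjugate.toBlocks₁₁ =
      ((Polynomial.evalRingHom 0).mapMatrix M'.adjugate).toBlocks₁₁ from rfl,
    show (Polynomial.evalRingHom 0).mapMatrix M'.toBlocks₂₂ =
      ((Polynomial.evalRingHom 0).mapMatrix M').toBlocks₂₂ from rfl,
    RingHom.map_adjugate, hM'] at h

end Matrix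

noncomputable def finCornersEquiv (q : ℕ) : Fin 2 ⊕ Fin q ≃ Fin (q + 2) :=
  Equiv.ofBijective (Sum.elim ![0, Fin.last _] fun i => i.castSucc.succ) <| by
    refine (Fintype.bijective_iff_injective_and_card _).mpr ⟨?_, by simp [add_comm]⟩
    rintro (a | a) (b | b) h <;> (try fin_cases a) <;> (try fin_cases b) <;>
      simp [Fin.ext_iff] at h ⊢ <;> omega

theorem Matrix.desnanot_jacobi {R : Type*} [CommRing R] {q : ℕ}
    (M : Matrix (Fin (q + 2)) (Fin (q + 2)) R) :
    M.det * (M.submatrix (fun i : Fin q => i.castSucc.succ) fun j => j.castSucc.succ).det =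
      (M.submatrix Fin.succ Fin.succ).det * (M.submatrix Fin.castSucc Fin.castSucc).det -
        (M.submatrix Fin.castSucc Fin.succ).det * (M.submatrix Fin.succ Fin.castSucc).det := by
  have h := det_toBlocks₁₁_adjugate (M.submatrix (finCornersEquiv q) (finCornersEquiv q))
  rw [adjugate_submatrix_equiv_self, det_fin_two, det_submatrix_equiv_self] at h
  change adjugate M 0 0 * adjugate M (Fin.last _) (Fin.last _) -
      adjugate M 0 (Fin.last _) * adjugate M (Fin.last _) 0 =
    M.det ^ 1 * (M.submatrix (fun i : Fin q => i.castSucc.succ) fun j => j.castSucc.succ).det at h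
  simp only [adjugate_fin_succ_eq_det_submatrix, Fin.succAbove_zero, Fin.succAbove_last,
    Fin.val_zero, Fin.val_last, pow_one, add_zero, zero_add, pow_zero, one_mul] at h
  have hsign : ((-1 : R) ^ (q + 1)) ^ 2 = 1 := by rw [← pow_mul, pow_mul']; simp
  linear_combination -h +
    ((M.submatrix Fin.succ Fin.succ).det * (M.submatrix Fin.castSucc Fin.castSucc).det -
      (M.submatrix Fin.castSucc Fin.succ).det * (M.submatrix Fin.succ Fin.castSucc).det) * hsign

section CompleteHomogeneous

variable {R : Type*} [CommRing R] {ι : Type*} [Fintype ι]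

theorem PowerSeries.mk_pow_mul_one_sub_C_mul_X (a : R) :
    PowerSeries.mk (a ^ ·) * (1 - PowerSeries.C a * PowerSeries.X) = 1 := by
  simpa [PowerSeries.rescale_mk, PowerSeries.rescale_X] using
    congrArg (PowerSeries.rescale a) (PowerSeries.mk_one_mul_one_sub_eq_one R)

/-- `∏ᵢ 1 / (1 - xᵢ t)`, the generating series of the complete homogeneous symmetric polynomials
`h_a(x)`. -/
noncomputable def completeSeries (x : ι → R) : R⟦X⟧ :=
  ∏ i, PowerSeries.mk (x i ^ ·)

noncomputable def completeHom (x : ι → R) (z : ℤ) : R :=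
  if 0 ≤ z then PowerSeries.coeff z.toNat (completeSeries x) else 0

theorem completeHom_natCast (x : ι → R) (a : ℕ) :
    completeHom x a = PowerSeries.coeff a (completeSeries x) := by
  simp [completeHom]

theorem completeHom_of_neg (x : ι → R) {z : ℤ} (hz : z < 0) : completeHom x z = 0 := by
  simp [completeHom, hz.not_ge]

theorem completeHom_zero (x : ι → R) : completeHom x 0 = 1 := by
  simpa [completeSeries, PowerSeries.coeff_zero_eq_constantCoeff] using completeHom_natCast x 0

variable [DecidableEq ι]

/-- `∏_{i ≠ j} (1 - xᵢ t)`: its coefficient of `t ^ s` is `(-1) ^ s` times the `s`-th elementary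
symmetric polynomial of the `xᵢ` with `i ≠ j`. -/
noncomputable def elemPolyErase (x : ι → R) (j : ι) : R[X] :=
  ∏ i ∈ univ.erase j, (1 - Polynomial.C (x i) * Polynomial.X)

theorem natDegree_elemPolyErase_lt (x : ι → R) (j : ι) :
    (elemPolyErase x j).natDegree < Fintype.card ι := by
  have hfactor (a : R) : ((1 : R[X]) - Polynomial.C a * Polynomial.X).natDegree ≤ 1 := by
    compute_degree
  have hprod := Polynomial.natDegree_prod_le (univ.erase j)
    fun i => (1 : R[X]) - Polynomial.C (x i) * Polynomial.X
  have hsum := sum_le_sum fun i (_ : i ∈ univ.erase j) => hfactor (x i)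
  have hcard : ∑ _i ∈ univ.erase j, 1 < Fintype.card ι := by
    simp [card_erase_of_mem, Fintype.card_pos_iff.mpr ⟨j⟩]
  exact hprod.trans_lt (hsum.trans_lt hcard)

theorem elemPolyErase_mul_completeSeries (x : ι → R) (j : ι) :
    (elemPolyErase x j : R⟦X⟧) * completeSeries x = PowerSeries.mk (x j ^ ·) := by
  rw [completeSeries, ← mul_prod_erase _ _ (mem_univ j), mul_left_comm, elemPolyErase,
    ← Polynomial.coeToPowerSeries.ringHom_apply, map_prod, ← prod_mul_distrib,
    prod_eq_one, mul_one]
  intro i _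
  rw [Polynomial.coeToPowerSeries.ringHom_apply, Polynomial.coe_sub, Polynomial.coe_one,
    Polynomial.coe_mul, Polynomial.coe_C, Polynomial.coe_X, mul_comm,
    PowerSeries.mk_pow_mul_one_sub_C_mul_X]

theorem sum_coeff_elemPolyErase_mul_completeHom (x : ι → R) (j : ι) (a : ℕ) :
    ∑ s ∈ range (Fintype.card ι), (elemPolyErase x j).coeff s * completeHom x (a - s) =
      x j ^ a := by
  set f : ℕ → R := fun s => (elemPolyErase x j).coeff s * completeHom x (a - s)
  have hlow : ∑ s ∈ range (Fintype.card ι), f s = ∑ s ∈ range (Fintype.card ι + a + 1), f s := by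
    refine sum_subset (range_subset_range.mpr (by omega)) fun s _ hs => ?_
    simp only [f, Polynomial.coeff_eq_zero_of_natDegree_lt
      ((natDegree_elemPolyErase_lt x j).trans_le (by simpa using hs)), zero_mul]
  have hhigh : ∑ s ∈ range (a + 1), f s = ∑ s ∈ range (Fintype.card ι + a + 1), f s := by
    refine sum_subset (range_subset_range.mpr (by omega)) fun s _ hs => ?_
    simp only [f, completeHom_of_neg x (z := a - s) (by simp at hs; omega), mul_zero]
  have hcoeff := congrArg (PowerSeries.coeff a) (elemPolyErase_mul_completeSeries x j)
  rw [PowerSeries.coeff_mul, Nat.sum_antidiagonal_eq_sum_range_succ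
    (fun s t => PowerSeries.coeff s (elemPolyErase x j : R⟦X⟧) * PowerSeries.coeff t _),
    PowerSeries.coeff_mk] at hcoeff
  rw [hlow, ← hhigh, ← hcoeff]
  refine sum_congr rfl fun s hs => ?_
  have hsa : (a : ℤ) - s = ((a - s : ℕ) : ℤ) := by simp at hs; omega
  simp only [f, hsa, completeHom_natCast, Polynomial.coeff_coe]

end CompleteHomogeneous

section JacobiTrudi

variable {R : Type*} [CommRing R] {ι : Type*} [Fintype ι]

noncomputable def jacobiTrudi (x : ι → R) (m : ℕ) (lam : ℕ → ℤ) : Matrix (Fin m) (Fin m) R :=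
  Matrix.of fun i j => completeHom x (lam i - i + j)

theorem det_jacobiTrudi_add (x : ι → R) {m : ℕ} {lam : ℕ → ℤ} (hlam : ∀ i, m ≤ i → lam i = 0)
    (p : ℕ) : (jacobiTrudi x (m + p) lam).det = (jacobiTrudi x m lam).det := by
  induction p with
  | zero => rfl
  | succ p ih =>
    have hlast : ∀ j, jacobiTrudi x (m + p + 1) lam (Fin.last _) j = completeHom x (j - (m + p)) :=
      fun j => by simp [jacobiTrudi, hlam, sub_eq_neg_add]
    rw [← ih, ← add_assoc, Matrix.det_succ_row _ (Fin.last _),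
      Fintype.sum_eq_single (Fin.last _) fun j hj => ?_]
    · have hminor : (jacobiTrudi x (m + p + 1) lam).submatrix Fin.castSucc Fin.castSucc =
          jacobiTrudi x (m + p) lam := rfl
      rw [hlast, Fin.val_last, Fin.succAbove_last, hminor, ← two_mul, Nat.cast_add, sub_self,
        completeHom_zero, (even_two_mul _).neg_one_pow, one_mul, one_mul]
    · have : (j : ℕ) < m + p := Fin.val_lt_last hj
      rw [hlast, completeHom_of_neg x (by omega), mul_zero, zero_mul]

theorem det_jacobiTrudi_zero (x : ι → R) (p : ℕ) : (jacobiTrudi x p fun _ => 0).det = 1 := by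
  have h := det_jacobiTrudi_add x (m := 0) (lam := fun _ => 0) (fun _ _ => rfl) p
  rwa [Matrix.det_fin_zero, zero_add] at h

theorem submatrix_jacobiTrudi_const (x : ι → R) (c : ℤ) {a b : ℕ} (s t : ℕ)
    {f g : Fin a → Fin b} (hf : ∀ i, (f i : ℕ) = i + s) (hg : ∀ j, (g j : ℕ) = j + t) :
    (jacobiTrudi x b fun _ => c).submatrix f g = jacobiTrudi x a fun _ => c - s + t := by
  ext i j
  simp only [jacobiTrudi, Matrix.submatrix_apply, Matrix.of_apply, hf, hg]
  push_cast
  ring_nf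

variable [DecidableEq ι]

noncomputable def elemMatrix {N : ℕ} (x : Fin N → R) : Matrix (Fin N) (Fin N) R :=
  Matrix.of fun r j => (elemPolyErase x j).coeff (N - 1 - r)

theorem jacobiTrudi_mul_elemMatrix {N : ℕ} (x : Fin N → R) (lam : ℕ → ℕ) :
    jacobiTrudi x N (fun i => lam i) * elemMatrix x =
      Matrix.of fun i j : Fin N => x j ^ (lam i + (N - 1 - i)) := by
  ext i j
  have hsum := sum_coeff_elemPolyErase_mul_completeHom x j (lam i + (N - 1 - i))
  rw [Fintype.card_fin, ← Fin.sum_univ_eq_sum_range] at hsum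
  rw [Matrix.mul_apply, ← Equiv.sum_comp Fin.revPerm, Matrix.of_apply, ← hsum]
  refine Fintype.sum_congr _ _ fun r => ?_
  have hr := r.isLt
  have hi := i.isLt
  simp only [jacobiTrudi, elemMatrix, Matrix.of_apply, Fin.revPerm_apply, Fin.val_rev]
  rw [mul_comm]
  congr 2 <;> omega

end JacobiTrudi

theorem det_schurDenominator_ne_zero (N : ℕ) :
    (Matrix.of fun i j : Fin N => Xfrac N j ^ (N - 1 - (i : ℕ))).det ≠ 0 := by
  have hinj : Function.Injective (Xfrac N) :=
    (IsFractionRing.injective _ _).comp (X_injective (σ := Fin N) (R := ℚ))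
  have hrev : (Matrix.of fun i j : Fin N => Xfrac N j ^ (N - 1 - (i : ℕ))) =
      (Matrix.vandermonde (Xfrac N)).transpose.submatrix Fin.revPerm id := by
    ext i j
    rw [Matrix.of_apply, Matrix.submatrix_apply, Matrix.transpose_apply, Matrix.vandermonde_apply,
      Fin.revPerm_apply, Fin.val_rev]
    congr 1
    omega
  rw [hrev, Matrix.det_permute, Matrix.det_transpose]
  exact mul_ne_zero (by simp) (Matrix.det_vandermonde_ne_zero_iff.mpr hinj)

theorem schurDet_eq_det_jacobiTrudi (N : ℕ) (lam : ℕ → ℕ) :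
    schurDet N lam = (jacobiTrudi (Xfrac N) N fun i => lam i).det := by
  have hnum := congrArg Matrix.det (jacobiTrudi_mul_elemMatrix (Xfrac N) lam)
  have hden := congrArg Matrix.det (jacobiTrudi_mul_elemMatrix (Xfrac N) 0)
  simp only [Matrix.det_mul, Pi.zero_apply, Nat.cast_zero, zero_add] at hnum hden
  rw [det_jacobiTrudi_zero, one_mul] at hden
  have hE := hden ▸ det_schurDenominator_ne_zero N
  rw [schurDet, ← hnum, ← hden, mul_div_cancel_right₀ _ hE]

theorem schurDet_rectPart {N m : ℕ} (c : ℕ) (hm : m ≤ N) :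
    schurDet N (rectPart c m) = (jacobiTrudi (Xfrac N) m fun _ => c).det := by
  obtain ⟨p, rfl⟩ := Nat.exists_eq_add_of_le hm
  rw [schurDet_eq_det_jacobiTrudi,
    det_jacobiTrudi_add _ fun i hi => by simp [rectPart, hi.not_gt]]
  congr 1
  ext i j
  simp [jacobiTrudi, rectPart]

/-- Bilinear identity for rectangular Schur polynomials:
`s_{(k^n)} ⬝ s_{(k^n)} = s_{((k+1)^n)} ⬝ s_{((k-1)^n)} + s_{(k^{n+1})} ⬝ s_{(k^{n-1})}`. -/
theorem schur_rectangular_bilinear (k n N : ℕ) (hk : 1 ≤ k) (hn : 1 ≤ n) (hN : n + 1 ≤ N) :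
    schurDet N (rectPart k n) * schurDet N (rectPart k n) =
      schurDet N (rectPart (k + 1) n) * schurDet N (rectPart (k - 1) n) +
        schurDet N (rectPart k (n + 1)) * schurDet N (rectPart k (n - 1)) := by
  obtain ⟨q, rfl⟩ : ∃ q, n = q + 1 := ⟨n - 1, by omega⟩
  have h := Matrix.desnanot_jacobi (q := q) (jacobiTrudi (Xfrac N) (q + 1 + 1) fun _ => (k : ℤ))
  rw [submatrix_jacobiTrudi_const _ _ 1 1 (by simp) (by simp),
    submatrix_jacobiTrudi_const _ _ 1 1 (by simp) (by simp),
    submatrix_jacobiTrudi_const _ _ 0 0 (by simp) (by simp),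
    submatrix_jacobiTrudi_const _ _ 0 1 (by simp) (by simp),
    submatrix_jacobiTrudi_const _ _ 1 0 (by simp) (by simp)] at h
  rw [schurDet_rectPart k (by omega : q + 1 ≤ N), schurDet_rectPart (k + 1) (by omega : q + 1 ≤ N),
    schurDet_rectPart (k - 1) (by omega : q + 1 ≤ N),
    schurDet_rectPart k (by omega : q + 1 + 1 ≤ N), Nat.add_sub_cancel,
    schurDet_rectPart k (by omega : q ≤ N)]
  push_cast [hk] at h ⊢
  simp only [sub_add_cancel, add_zero, sub_zero] at h
  linear_combination -h
end

section
/- Desnanot–Jacobi (Dodgson condensation) identity: for an ℓ×ℓ matrix M over a commutative ring, det(M₁¹) · det(M_ℓ^ℓ) = det(M₁^ℓ) · det(M_ℓ¹) + det(M) · det(M_{1,ℓ}^{1,ℓ}). -/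
open Matrix Polynomial

section helpers

variable {R : Type*} [CommRing R] {m : Type*} [DecidableEq m] [Fintype m]

private lemma dj_updateRow_comm (X : Matrix m m R) {p q : m} (h : p ≠ q) (v w : m → R) :
    (X.updateRow p v).updateRow q w = (X.updateRow q w).updateRow p v := by
  ext i j
  rcases eq_or_ne i q with rfl | h1
  · rw [Matrix.updateRow_self, Matrix.updateRow_ne (Ne.symm h), Matrix.updateRow_self]
  · rcases eq_or_ne i p with rfl | h2
    · rw [Matrix.updateRow_ne h1, Matrix.updateRow_self, Matrix.updateRow_self]
    · rw [Matrix.updateRow_ne h1, Matrix.updateRow_ne h2, Matrix.updateRow_ne h2,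
        Matrix.updateRow_ne h1]

private lemma dj_updateCol_comm (X : Matrix m m R) {p q : m} (h : p ≠ q) (v w : m → R) :
    (X.updateCol p v).updateCol q w = (X.updateCol q w).updateCol p v := by
  ext i j
  rcases eq_or_ne j q with rfl | h1
  · rw [Matrix.updateCol_self, Matrix.updateCol_ne (Ne.symm h), Matrix.updateCol_self]
  · rcases eq_or_ne j p with rfl | h2
    · rw [Matrix.updateCol_ne h1, Matrix.updateCol_self, Matrix.updateCol_self]
    · rw [Matrix.updateCol_ne h1, Matrix.updateCol_ne h2, Matrix.updateCol_ne h2,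
        Matrix.updateCol_ne h1]

private lemma dj_one_row (p : m) : (1 : Matrix m m R) p = Pi.single p 1 := by
  ext j; simp [Matrix.one_apply, Pi.single_apply, eq_comm]

private lemma dj_swap {p q : m} (hpq : p ≠ q) :
    (((1 : Matrix m m R).updateRow p (Pi.single q 1)).updateRow q (Pi.single p 1)).det = -1 := by
  have hm : ((1 : Matrix m m R).updateRow p (Pi.single q 1)).updateRow q (Pi.single p 1)
      = (1 : Matrix m m R).submatrix (Equiv.swap p q) id := by
    ext a b
    rcases eq_or_ne a q with rfl | h1
    · rw [Matrix.updateRow_self, Matrix.submatrix_apply, Equiv.swap_apply_right, id_eq,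
        dj_one_row p]
    · rcases eq_or_ne a p with rfl | h2
      · rw [Matrix.updateRow_ne h1, Matrix.updateRow_self, Matrix.submatrix_apply,
          Equiv.swap_apply_left, id_eq, dj_one_row q]
      · rw [Matrix.updateRow_ne h1, Matrix.updateRow_ne h2, Matrix.submatrix_apply,
          Equiv.swap_apply_of_ne_of_ne h2 h1, id_eq]
  rw [hm, Matrix.det_permute, Matrix.det_one, Equiv.Perm.sign_swap hpq]
  simp

/-- determinant of the identity with two rows replaced by basis vectors -/
private lemma dj_base {p q k i : m} (hpq : p ≠ q) :
    (((1 : Matrix m m R).updateRow p (Pi.single k 1)).updateRow q (Pi.single i 1)).det =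
      (if k = p then (1:R) else 0) * (if i = q then 1 else 0)
        - (if k = q then (1:R) else 0) * (if i = p then 1 else 0) := by
  by_cases hkp : k = p
  · subst hkp
    by_cases hiq : i = q
    · subst hiq
      rw [← dj_one_row k, Matrix.updateRow_eq_self, ← dj_one_row i, Matrix.updateRow_eq_self,
        Matrix.det_one]
      simp [hpq, Ne.symm hpq]
    · rw [if_pos rfl, if_neg hiq, if_neg hpq]
      by_cases hik : i = k
      · subst hik
        rw [Matrix.det_zero_of_row_eq hpq]
        · simp
        · rw [Matrix.updateRow_ne hpq, Matrix.updateRow_self, Matrix.updateRow_self]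
      · rw [Matrix.det_zero_of_row_eq (Ne.symm hiq) (i := q) (j := i)]
        · simp [hik]
        · rw [Matrix.updateRow_self, Matrix.updateRow_ne hiq, Matrix.updateRow_ne hik,
            dj_one_row i]
  · by_cases hkq : k = q
    · subst hkq
      rw [if_neg hkp, if_pos rfl]
      by_cases hip : i = p
      · subst hip
        rw [dj_swap hpq, if_pos rfl, if_neg (Ne.symm hkp)]
        ring
      · rw [if_neg hip]
        by_cases hik : i = k
        · subst hik
          rw [Matrix.det_zero_of_row_eq hpq]
          · ring
          · rw [Matrix.updateRow_ne hpq, Matrix.updateRow_self, Matrix.updateRow_self]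
        · rw [Matrix.det_zero_of_row_eq (i := k) (j := i) (Ne.symm hik)]
          · ring
          · rw [Matrix.updateRow_self, Matrix.updateRow_ne hik, Matrix.updateRow_ne hip,
              dj_one_row i]
    · rw [if_neg hkp, if_neg hkq]
      rw [Matrix.det_zero_of_row_eq (i := p) (j := k) (Ne.symm hkp)]
      · ring
      · rw [Matrix.updateRow_ne hpq, Matrix.updateRow_self, Matrix.updateRow_ne hkq,
          Matrix.updateRow_ne hkp, dj_one_row k]

/-- expansion of a determinant with one row replaced -/
private lemma dj_det_updateRow (C : Matrix m m R) (r : m) (u : m → R) :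
    (C.updateRow r u).det = ∑ i, (C.adjugate i r) * u i := by
  rw [← Matrix.cramer_transpose_apply, Matrix.cramer_eq_adjugate_mulVec,
    ← Matrix.adjugate_transpose]
  simp [Matrix.mulVec, dotProduct]

/-- determinant of the identity with two rows replaced -/
private lemma dj_two_rows {p q : m} (hpq : p ≠ q) (v w : m → R) :
    (((1 : Matrix m m R).updateRow p v).updateRow q w).det = v p * w q - v q * w p := by
  rw [dj_det_updateRow]
  have h1 : ∀ i : m, ((1 : Matrix m m R).updateRow p v).adjugate i q
      = (if i = q then (1:R) else 0) * v p - (if i = p then (1:R) else 0) * v q := by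
    intro i
    rw [Matrix.adjugate_apply, dj_updateRow_comm _ hpq, dj_det_updateRow]
    have h2 : ∀ k : m, ((1 : Matrix m m R).updateRow q (Pi.single i 1)).adjugate k p
        = (if k = p then (1:R) else 0) * (if i = q then 1 else 0)
          - (if k = q then (1:R) else 0) * (if i = p then 1 else 0) := by
      intro k
      rw [Matrix.adjugate_apply, dj_updateRow_comm _ (Ne.symm hpq), dj_base hpq]
    simp only [h2, sub_mul]
    rw [Finset.sum_sub_distrib]
    simp [Finset.sum_ite_eq', ite_mul, mul_comm]
  simp only [h1, sub_mul]
  rw [Finset.sum_sub_distrib]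
  simp [Finset.sum_ite_eq', ite_mul]

end helpers

section helpers2

variable {R : Type*} [CommRing R] {m : Type*} [DecidableEq m] [Fintype m]

private lemma dj_mul_updateCol (A X : Matrix m m R) (j : m) (c : m → R) :
    A * (X.updateCol j c) = (A * X).updateCol j (A *ᵥ c) := by
  ext i j'
  rcases eq_or_ne j' j with rfl | h
  · simp [Matrix.mul_apply, Matrix.updateCol_apply, Matrix.mulVec, dotProduct]
  · simp [Matrix.mul_apply, Matrix.updateCol_apply, Matrix.mulVec, dotProduct, h]

private lemma dj_det_updateCol_single (X : Matrix m m R) (j i : m) :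
    (X.updateCol j (Pi.single i 1)).det = X.adjugate j i := by
  rw [← Matrix.cramer_apply, Matrix.cramer_eq_adjugate_mulVec]
  simp

private lemma dj_submatrix_updateCol {k : Type*} [DecidableEq k] (X : Matrix m m R)
    (f g : k → m) (c : m) (c' : k) (hg : ∀ j, g j = c ↔ j = c') (v : m → R) :
    (X.updateCol c v).submatrix f g = (X.submatrix f g).updateCol c' (v ∘ f) := by
  ext a b
  simp only [Matrix.submatrix_apply, Matrix.updateCol_apply, hg b, Function.comp_apply]

end helpers2

private lemma dj_key {R : Type*} [CommRing R] (n : ℕ)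
    (M : Matrix (Fin (n + 2)) (Fin (n + 2)) R) (hreg : IsLeftRegular M.det) :
    (M.submatrix (Fin.succAbove 0) (Fin.succAbove 0)).det *
        (M.submatrix (Fin.succAbove (Fin.last (n + 1))) (Fin.succAbove (Fin.last (n + 1)))).det =
      (M.submatrix (Fin.succAbove 0) (Fin.succAbove (Fin.last (n + 1)))).det *
          (M.submatrix (Fin.succAbove (Fin.last (n + 1))) (Fin.succAbove 0)).det +
        M.det *
          (M.submatrix (fun a : Fin n => a.succ.castSucc) (fun a : Fin n => a.succ.castSucc)).det := by
  set l : Fin (n + 2) := Fin.last (n + 1) with hl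
  have h0l : (0 : Fin (n + 2)) ≠ l := by
    intro h
    have := congrArg Fin.val h
    simp [hl] at this
  -- the four corner minors as adjugate entries
  have ha00 : (M.submatrix (Fin.succAbove 0) (Fin.succAbove 0)).det = M.adjugate 0 0 := by
    rw [Matrix.adjugate_fin_succ_eq_det_submatrix]
    simp
  have hall : (M.submatrix (Fin.succAbove l) (Fin.succAbove l)).det = M.adjugate l l := by
    rw [Matrix.adjugate_fin_succ_eq_det_submatrix]
    simp [hl, Even.add_self, Even.neg_one_pow]
  have hcross : (M.submatrix (Fin.succAbove 0) (Fin.succAbove l)).det *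
      (M.submatrix (Fin.succAbove l) (Fin.succAbove 0)).det
      = M.adjugate l 0 * M.adjugate 0 l := by
    rw [Matrix.adjugate_fin_succ_eq_det_submatrix, Matrix.adjugate_fin_succ_eq_det_submatrix]
    simp only [Fin.val_zero, Nat.zero_add, Nat.add_zero, hl, Fin.val_last]
    rw [mul_mul_mul_comm, ← pow_add]
    rw [Even.neg_one_pow (Even.add_self (n + 1)), one_mul]
  -- the two adjugate columns
  set v : Fin (n + 2) → R := fun i => M.adjugate i 0 with hv
  set w : Fin (n + 2) → R := fun i => M.adjugate i l with hw
  -- determinant of the "condensation" matrix B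
  have hB : (((1 : Matrix (Fin (n + 2)) (Fin (n + 2)) R).updateCol 0 v).updateCol l w).det
      = M.adjugate 0 0 * M.adjugate l l - M.adjugate l 0 * M.adjugate 0 l := by
    rw [← Matrix.det_transpose, ← Matrix.updateRow_transpose, ← Matrix.updateRow_transpose,
      Matrix.transpose_one, dj_two_rows h0l]
  -- M * B
  have hv0 : M *ᵥ v = (M.det • (Pi.single (0 : Fin (n + 2)) (1 : R) : Fin (n + 2) → R)) := by
    funext i
    have h1 : (M *ᵥ v) i = (M * M.adjugate) i 0 := by
      simp [hv, Matrix.mul_apply, Matrix.mulVec, dotProduct]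
    rw [h1, Matrix.mul_adjugate]
    simp [Matrix.smul_apply, Matrix.one_apply, Pi.single_apply, eq_comm]
  have hvl : M *ᵥ w = (M.det • (Pi.single l (1 : R) : Fin (n + 2) → R)) := by
    funext i
    have h1 : (M *ᵥ w) i = (M * M.adjugate) i l := by
      simp [hw, Matrix.mul_apply, Matrix.mulVec, dotProduct]
    rw [h1, Matrix.mul_adjugate]
    simp [Matrix.smul_apply, Matrix.one_apply, Pi.single_apply, eq_comm]
  have hMB : M * (((1 : Matrix (Fin (n + 2)) (Fin (n + 2)) R).updateCol 0 v).updateCol l w)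
      = (M.updateCol 0 (M.det • (Pi.single (0 : Fin (n + 2)) (1 : R) : Fin (n + 2) → R))).updateCol l ((M.det • (Pi.single l (1 : R) : Fin (n + 2) → R))) := by
    rw [dj_mul_updateCol, dj_mul_updateCol, Matrix.mul_one, hv0, hvl]
  -- the inner minor
  have hsucc_iff : ∀ j : Fin (n + 1), Fin.succ j = l ↔ j = Fin.last n := by
    intro j
    rw [hl, ← Fin.succ_last, Fin.succ_inj]
  have hcompsingle : (Pi.single l (1 : R)) ∘ Fin.succ = Pi.single (Fin.last n) 1 := by
    funext k
    simp only [Function.comp_apply, Pi.single_apply, hsucc_iff k]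
  have hT : ((M.updateCol l (Pi.single l 1)).updateCol 0 (Pi.single 0 1)).det
      = (M.submatrix (fun a : Fin n => a.succ.castSucc) (fun a : Fin n => a.succ.castSucc)).det := by
    rw [dj_det_updateCol_single, Matrix.adjugate_fin_succ_eq_det_submatrix]
    rw [Fin.succAbove_zero]
    rw [dj_submatrix_updateCol (c' := Fin.last n) _ _ _ _ (fun j => hsucc_iff j)]
    rw [hcompsingle, dj_det_updateCol_single, Matrix.adjugate_fin_succ_eq_det_submatrix]
    rw [Matrix.submatrix_submatrix, Fin.succAbove_last]
    simp only [Fin.val_zero, Fin.val_last, Nat.zero_add, Nat.add_zero, pow_zero,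
      Even.neg_one_pow (Even.add_self n), one_mul]
    have hfun : (Fin.succ ∘ Fin.castSucc : Fin n → Fin (n + 2))
        = fun a : Fin n => a.succ.castSucc := by
      funext a
      exact Fin.succ_castSucc a
    rw [hfun]
  -- compute det (M * B)
  have hdetMB : M.det *
      ((((1 : Matrix (Fin (n + 2)) (Fin (n + 2)) R).updateCol 0 v).updateCol l w).det)
      = M.det * (M.det *
        (M.submatrix (fun a : Fin n => a.succ.castSucc) (fun a : Fin n => a.succ.castSucc)).det) := by
    rw [← Matrix.det_mul, hMB, Matrix.det_updateCol_smul]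
    rw [dj_updateCol_comm _ h0l, Matrix.det_updateCol_smul]
    rw [hT]
  have hcancel := hreg hdetMB
  rw [hB] at hcancel
  rw [ha00, hall, hcross]
  linear_combination hcancel

/-- Desnanot–Jacobi (Dodgson condensation) identity, for an `ℓ × ℓ` matrix with `ℓ = n + 2 ≥ 2`:
`det(M₁¹) ⬝ det(M_ℓ^ℓ) = det(M₁^ℓ) ⬝ det(M_ℓ¹) + det(M) ⬝ det(M_{1,ℓ}^{1,ℓ})`,
where `M_i^j` denotes `M` with row `i` and column `j` deleted. -/
theorem desnanot_jacobi {R : Type*} [CommRing R] (n : ℕ)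
    (M : Matrix (Fin (n + 2)) (Fin (n + 2)) R) :
    (M.submatrix (Fin.succAbove 0) (Fin.succAbove 0)).det *
        (M.submatrix (Fin.succAbove (Fin.last (n + 1))) (Fin.succAbove (Fin.last (n + 1)))).det =
      (M.submatrix (Fin.succAbove 0) (Fin.succAbove (Fin.last (n + 1)))).det *
          (M.submatrix (Fin.succAbove (Fin.last (n + 1))) (Fin.succAbove 0)).det +
        M.det *
          (M.submatrix (fun a : Fin n => a.succ.castSucc) (fun a : Fin n => a.succ.castSucc)).det := by
  set f : R[X] →+* R := Polynomial.evalRingHom 0 with hf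
  set N : Matrix (Fin (n + 2)) (Fin (n + 2)) R[X] :=
    M.map Polynomial.C + (Polynomial.X : R[X]) • 1 with hN
  have hmonic : N.det.Monic := by
    simp only [hN, Polynomial.Monic.def, ← Polynomial.leadingCoeff_det_X_one_add_C M, add_comm]
  have hkey := dj_key n N hmonic.isRegular.left
  have hmap : N.map f = M := by
    ext i j
    simp [hN, hf, Matrix.add_apply, Matrix.map_apply, Matrix.smul_apply, Matrix.one_apply,
      smul_eq_mul, apply_ite]
  have e := congrArg f hkey
  simp only [_root_.map_mul, _root_.map_add, RingHom.map_det, RingHom.mapMatrix_apply, ← Matrix.submatrix_map,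
    hmap] at e
  exact e
end

section
/- The map Λ ↦ (Λ*, Λ^⊛) from superpartitions to pairs of partitions is injective: two superpartitions Λ and Ω are equal if and only if Λ* = Ω* and Λ^⊛ = Ω^⊛. -/
/-- A superpartition of degree `(n|m)`: strictly decreasing fermionic parts `a` (length `m`,
last part possibly zero) and a weakly decreasing list `s` of positive bosonic parts,
total sum `n`. -/
structure SuperPartition (n m : ℕ) where
  a : Fin m → ℕ
  s : List ℕ
  ha : StrictAnti a
  hs : s.Pairwise (· ≥ ·)
  hpos : ∀ x ∈ s, 0 < x
  hsum : (∑ i, a i) + s.sum = n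

/-- The `i`-th largest element of a multiset of naturals (0 if out of range). -/
def sortDesc (M : Multiset ℕ) (i : ℕ) : ℕ := ((M.sort (· ≤ ·)).reverse).getD i 0

/-- `Λ*`: all parts of `Λ` rearranged in weakly decreasing order. -/
def starFun {n m : ℕ} (L : SuperPartition n m) (i : ℕ) : ℕ :=
  sortDesc (Multiset.map L.a Finset.univ.val + (L.s : Multiset ℕ)) i

/-- `Λ^⊛`: the parts of `Λ^a` increased by one together with the parts of `Λ^s`,
rearranged in weakly decreasing order. -/
def circFun {n m : ℕ} (L : SuperPartition n m) (i : ℕ) : ℕ :=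
  sortDesc (Multiset.map (fun k => L.a k + 1) Finset.univ.val + (L.s : Multiset ℕ)) i

/-!
Write `A` for the multiset of fermionic parts and `S` for the bosonic ones, so that `Λ*` and
`Λ^⊛` are the decreasing arrangements of `A + S` and `A.map (· + 1) + S`. The parts of the
second multiset are positive, so `Λ^⊛` recovers it together with its size, hence `card S`, and
then `Λ*` recovers `A + S`. Comparing multiplicities of `x + 1` in both multisets gives
`count x A - count x B = count (x + 1) A - count (x + 1) B` for two candidates `A`, `B`, and the
difference vanishes at `x = 0` since no shifted part is zero; so `A` and then `S` are determined.
A strictly decreasing tuple is determined by its values, a weakly decreasing list by its entries.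
-/

lemma sortDesc_eq_getElem {M : Multiset ℕ} {i : ℕ} (hi : i < Multiset.card M) :
    sortDesc M i = ((M.sort (· ≤ ·)).reverse)[i]'(by simpa using hi) :=
  List.getD_eq_getElem _ _ _

lemma sortDesc_of_card_le {M : Multiset ℕ} {i : ℕ} (hi : Multiset.card M ≤ i) :
    sortDesc M i = 0 :=
  List.getD_eq_default _ _ (by simpa using hi)

lemma sortDesc_pos_iff {M : Multiset ℕ} (hM : ∀ x ∈ M, 0 < x) (i : ℕ) :
    0 < sortDesc M i ↔ i < Multiset.card M := by
  refine ⟨fun h => ?_, fun hi => ?_⟩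
  · by_contra! hi
    simp [sortDesc_of_card_le hi] at h
  · rw [sortDesc_eq_getElem hi]
    exact hM _ (by rw [← Multiset.mem_sort (· ≤ ·), ← List.mem_reverse]; exact List.getElem_mem _)

lemma eq_of_sortDesc_eq_of_card_eq {M N : Multiset ℕ} (hcard : Multiset.card M = Multiset.card N)
    (h : ∀ i, sortDesc M i = sortDesc N i) : M = N := by
  have hl : (M.sort (· ≤ ·)).reverse = (N.sort (· ≤ ·)).reverse := by
    refine List.ext_getElem (by simp [hcard]) fun i hM hN => ?_
    have hi : i < Multiset.card M := by simpa using hM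
    rw [← sortDesc_eq_getElem hi, ← sortDesc_eq_getElem (hcard ▸ hi), h]
  rw [← Multiset.sort_eq M (· ≤ ·), ← Multiset.coe_reverse, hl, Multiset.coe_reverse,
    Multiset.sort_eq]

lemma eq_of_sortDesc_eq_of_pos {M N : Multiset ℕ} (hM : ∀ x ∈ M, 0 < x) (hN : ∀ x ∈ N, 0 < x)
    (h : ∀ i, sortDesc M i = sortDesc N i) : M = N := by
  refine eq_of_sortDesc_eq_of_card_eq (eq_of_forall_lt_iff fun i => ?_) h
  rw [← sortDesc_pos_iff hM, ← sortDesc_pos_iff hN, h]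

lemma Multiset.eq_of_add_eq_of_map_add_one_add_eq {A B S T : Multiset ℕ} (h : A + S = B + T)
    (hsucc : A.map (· + 1) + S = B.map (· + 1) + T) : A = B := by
  have hcount x := congrArg (count x) h
  have hcount_succ x := congrArg (count x) hsucc
  simp only [count_add] at hcount hcount_succ
  have hmap (C : Multiset ℕ) x : count (x + 1) (C.map (· + 1)) = count x C :=
    count_map_eq_count' _ C (add_left_injective 1) x
  have hmap_zero (C : Multiset ℕ) : count 0 (C.map (· + 1)) = 0 := by simp
  ext x
  induction x with
  | zero => have := hcount_succ 0; have := hcount 0; simp only [hmap_zero] at *; omega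
  | succ x ih => have := hcount_succ (x + 1); have := hcount (x + 1); simp only [hmap] at *; omega

lemma StrictAnti.eq_of_map_univ_eq {m : ℕ} {α : Type*} [Preorder α] {a b : Fin m → α}
    (ha : StrictAnti a) (hb : StrictAnti b)
    (h : Multiset.map a Finset.univ.val = Multiset.map b Finset.univ.val) : a = b := by
  refine (ha.range_inj hb).1 (Set.ext fun x => ?_)
  simpa using congrArg (x ∈ ·) h

namespace SuperPartition

variable {n m : ℕ}

lemma ext_of_eq {Λ Ω : SuperPartition n m} (ha : Λ.a = Ω.a) (hs : Λ.s = Ω.s) : Λ = Ω := by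
  cases Λ; cases Ω; simp_all

lemma map_a_add_one (Λ : SuperPartition n m) :
    Multiset.map (fun k => Λ.a k + 1) Finset.univ.val =
      (Multiset.map Λ.a Finset.univ.val).map (· + 1) :=
  (Multiset.map_map _ _ _).symm

lemma pos_of_mem_circ (Λ : SuperPartition n m) :
    ∀ x ∈ Multiset.map (fun k => Λ.a k + 1) Finset.univ.val + (Λ.s : Multiset ℕ), 0 < x := by
  simpa [or_imp, forall_and] using Λ.hpos

end SuperPartition

/-- The map `Λ ↦ (Λ*, Λ^⊛)` is injective: two superpartitions `Λ`, `Ω` of degree `(n|m)` are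
equal if and only if `Λ* = Ω*` and `Λ^⊛ = Ω^⊛`. -/
theorem superPartition_star_circ_injective (n m : ℕ) (Λ Ω : SuperPartition n m) :
    Λ = Ω ↔ (∀ i, starFun Λ i = starFun Ω i) ∧ (∀ i, circFun Λ i = circFun Ω i) := by
  refine ⟨by rintro rfl; exact ⟨fun _ => rfl, fun _ => rfl⟩, fun ⟨hstar, hcirc⟩ => ?_⟩
  have hcircM := eq_of_sortDesc_eq_of_pos Λ.pos_of_mem_circ Ω.pos_of_mem_circ hcirc
  have hstarM := eq_of_sortDesc_eq_of_card_eq (by simpa using congrArg Multiset.card hcircM) hstar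
  rw [Λ.map_a_add_one, Ω.map_a_add_one] at hcircM
  have ha := Multiset.eq_of_add_eq_of_map_add_one_add_eq hstarM hcircM
  rw [ha, add_right_inj, Multiset.coe_eq_coe] at hstarM
  exact SuperPartition.ext_of_eq (Λ.ha.eq_of_map_univ_eq Ω.ha ha)
    (hstarM.eq_of_pairwise' Λ.hs Ω.hs)
end

section
/- For a purely fermionic superpartition Λ = (Λ^a; ) (with empty bosonic part), there is exactly one super semi-standard tableau of shape Λ and content Λ, and no super semi-standard tableau of any other content; hence the combinatorial Schur superpolynomial satisfies s^c_{(Λ^a;)} = m_{(Λ^a;)}. -/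
open Finset
open scoped Classical

/-! Superpartitions are encoded by the pair of functions `star circ : ℕ → ℕ`
(`Λ*` and `Λ^⊛` as weakly decreasing functions); row `i` is fermionic (ends with a circle,
sitting in column `star i`) when `circ i = star i + 1`. `L` is a bound on the number of rows,
`N` the size of the alphabet `{1, …, N}`. A filling is a pair `(c, T)` where `c i` is the entry
of the circle of the fermionic row `i` and `T i j` the entry of the box `(i, j)`, `j < star i`. -/

/-- Row `i` is fermionic. -/
def frow (star circ : ℕ → ℕ) (i : ℕ) : Prop := circ i = star i + 1

/-- `(star, circ)` encodes a valid superpartition diagram with at most `L` rows. -/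
def ValidSP (star circ : ℕ → ℕ) (L : ℕ) : Prop :=
  Antitone star ∧ Antitone circ ∧ (∀ i, star i ≤ circ i ∧ circ i ≤ star i + 1) ∧
    (∀ i i', frow star circ i → frow star circ i' → star i = star i' → i = i') ∧
    (∀ i, L ≤ i → circ i = 0)

/-- `v` is a fermionic number: it fills one of the circles. -/
def FermVal (star circ c : ℕ → ℕ) (v : ℕ) : Prop := ∃ i, frow star circ i ∧ c i = v

/-- The row of the circle filled with the fermionic number `v`. -/
noncomputable def crow (star circ c : ℕ → ℕ) (v : ℕ) : ℕ :=
  sInf {i | frow star circ i ∧ c i = v}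

/-- Rule 2 (ordering on the alphabet): the fermionic numbers are the largest ones, ordered
according to the position of their circle read from top to bottom; bosonic numbers are
ordered naturally. -/
def slt (star circ c : ℕ → ℕ) (u v : ℕ) : Prop :=
  (¬ FermVal star circ c u ∧ ¬ FermVal star circ c v ∧ u < v) ∨
    (¬ FermVal star circ c u ∧ FermVal star circ c v) ∨
    (FermVal star circ c u ∧ FermVal star circ c v ∧
      crow star circ c v < crow star circ c u)

/-- The weak version of the ordering `slt`. -/
def sle (star circ c : ℕ → ℕ) (u v : ℕ) : Prop := u = v ∨ slt star circ c u v

/-- Column `j` is fermionic (ends with a circle). -/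
def fcol (star circ : ℕ → ℕ) (j : ℕ) : Prop := ∃ i, frow star circ i ∧ star i = j

/-- The boxes of bosonic rows carrying the value `v`. -/
noncomputable def bocc (star circ : ℕ → ℕ) (L : ℕ) (T : ℕ → ℕ → ℕ) (v : ℕ) :
    Finset (ℕ × ℕ) :=
  (range L ×ˢ range (circ 0)).filter
    (fun p => ¬ frow star circ p.1 ∧ p.2 < star p.1 ∧ T p.1 p.2 = v)

/-- The number of bosonic columns strictly to the right of column `j0`. -/
noncomputable def bcolsRightOf (star circ : ℕ → ℕ) (j0 : ℕ) : ℕ :=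
  ((range (circ 0)).filter (fun j => j0 < j ∧ ¬ fcol star circ j)).card

/-- The number of bosonic columns strictly between columns `j0` and `j1`. -/
noncomputable def bcolsBetween (star circ : ℕ → ℕ) (j0 j1 : ℕ) : ℕ :=
  ((range (circ 0)).filter (fun j => j0 < j ∧ j < j1 ∧ ¬ fcol star circ j)).card

/-- The maximal number of doublets: disjoint pairs formed by a box of `A` and a box of `B`
lying in a strictly lower row. -/
noncomputable def maxDoublets (A B : Finset (ℕ × ℕ)) : ℕ :=
  sSup {d | ∃ P : Finset (ℕ × ℕ), P ⊆ A ∧ P.card = d ∧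
    ∃ f : ℕ × ℕ → ℕ × ℕ, Set.InjOn f ↑P ∧ ∀ x ∈ P, f x ∈ B ∧ x.1 < (f x).1}

/-- `(c, T)` is a super semi-standard tableau of shape `(star, circ)` with entries in
`{1, …, N}` (Rules 1–5). -/
def IsSSST (star circ : ℕ → ℕ) (N L : ℕ) (c : ℕ → ℕ) (T : ℕ → ℕ → ℕ) : Prop :=
  -- Rule 1: the circled numbers are distinct elements of the alphabet
  (∀ i, frow star circ i → 1 ≤ c i ∧ c i ≤ N) ∧
  (∀ i i', frow star circ i → frow star circ i' → c i = c i' → i = i') ∧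
  -- box entries belong to the alphabet
  (∀ i j, j < star i → 1 ≤ T i j ∧ T i j ≤ N) ∧
  -- Rule 3: boxes of fermionic rows are frozen to the circled value
  (∀ i, frow star circ i → ∀ j, j < star i → T i j = c i) ∧
  -- Rule 4 (a): a fermionic number occurs in bosonic rows only strictly to the right of
  -- the fermionic column ending with its circle
  (∀ i, frow star circ i → ∀ r j, ¬ frow star circ r → j < star r →
    T r j = c i → star i < j) ∧
  -- Rule 4 (b): a fermionic number occurs at most `c_{k,0}` times in bosonic rows
  (∀ i, frow star circ i →
    (bocc star circ L T (c i)).card ≤ bcolsRightOf star circ (star i)) ∧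
  -- Rule 4 (b): and at most `c_{k,k-1}` times as a singlet (occurrences not paired into a
  -- doublet with the preceding fermionic number, which must lie in a strictly lower row)
  (∀ i, frow star circ i → ∀ p, p < i → frow star circ p →
    (∀ q, p < q → q < i → ¬ frow star circ q) →
    (bocc star circ L T (c i)).card -
        maxDoublets (bocc star circ L T (c i)) (bocc star circ L T (c p)) ≤
      bcolsBetween star circ (star i) (star p)) ∧
  -- Rule 5: bosonic rows are weakly increasing
  (∀ i, ¬ frow star circ i → ∀ j j', j ≤ j' → j' < star i →
    sle star circ c (T i j) (T i j')) ∧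
  -- Rule 5: columns are strictly increasing, disregarding the frozen fermionic rows
  (∀ i i' j, i < i' → ¬ frow star circ i → ¬ frow star circ i' → j < star i' →
    slt star circ c (T i j) (T i' j))

/-- Normalization of the box filling outside the diagram. -/
def NormT (star : ℕ → ℕ) (T : ℕ → ℕ → ℕ) : Prop := ∀ i j, ¬ j < star i → T i j = 0

/-- Normalization of the circle filling outside the fermionic rows. -/
def NormC (star circ : ℕ → ℕ) (c : ℕ → ℕ) : Prop := ∀ i, ¬ frow star circ i → c i = 0

/-- For a purely fermionic superpartition (every nonempty row ends with a circle), the super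
semi-standard tableaux are exactly the fillings where the circles carry distinct numbers from
the alphabet and every box is frozen to its row's circled value; consequently, for every
admissible circle content there is exactly one super semi-standard tableau, so that
`s^c_{(Λ^a;)} = m_{(Λ^a;)}`. -/
theorem ssst_purely_fermionic (star circ : ℕ → ℕ) (N L : ℕ)
    (hvalid : ValidSP star circ L)
    (hpure : ∀ i, circ i ≠ 0 → frow star circ i) :
    (∀ c T, IsSSST star circ N L c T ↔
      ((∀ i, frow star circ i → 1 ≤ c i ∧ c i ≤ N) ∧
       (∀ i i', frow star circ i → frow star circ i' → c i = c i' → i = i') ∧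
       (∀ i j, j < star i → T i j = c i))) ∧
    (∀ c1 : ℕ → ℕ, (∀ i, frow star circ i → 1 ≤ c1 i ∧ c1 i ≤ N) →
      (∀ i i', frow star circ i → frow star circ i' → c1 i = c1 i' → i = i') →
      Nat.card {p : (ℕ → ℕ) × (ℕ → ℕ → ℕ) //
        IsSSST star circ N L p.1 p.2 ∧ NormC star circ p.1 ∧ NormT star p.2 ∧
          ∀ i, frow star circ i → p.1 i = c1 i} = 1) := by
  obtain ⟨hs, hc, hsc, hinjrow, hL⟩ := hvalid
  have hstar0 : ∀ i, ¬ frow star circ i → star i = 0 := by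
    intro i hi
    have hc0 : circ i = 0 := by
      by_contra h
      exact hi (hpure i h)
    have := (hsc i).1
    omega
  have hfrow : ∀ i, 0 < star i → frow star circ i := by
    intro i h
    by_contra hf
    have := hstar0 i hf; omega
  have hbocc : ∀ (T : ℕ → ℕ → ℕ) (v : ℕ), bocc star circ L T v = ∅ := by
    intro T v
    apply Finset.filter_false_of_mem
    intro p hp h
    have := hstar0 p.1 h.1
    omega
  have hiff : ∀ c T, IsSSST star circ N L c T ↔
      ((∀ i, frow star circ i → 1 ≤ c i ∧ c i ≤ N) ∧
       (∀ i i', frow star circ i → frow star circ i' → c i = c i' → i = i') ∧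
       (∀ i j, j < star i → T i j = c i)) := by
    intro c T
    constructor
    · rintro ⟨h1, h2, _, h4, _⟩
      exact ⟨h1, h2, fun i j hj => h4 i (hfrow i (by omega)) j hj⟩
    · rintro ⟨h1, h2, h3⟩
      refine ⟨h1, h2, ?_, ?_, ?_, ?_, ?_, ?_, ?_⟩
      · intro i j hj
        rw [h3 i j hj]; exact h1 i (hfrow i (by omega))
      · intro i _ j hj; exact h3 i j hj
      · intro i _ r j hr hjr _
        exact absurd (hstar0 r hr) (by omega)
      · intro i _
        rw [hbocc, Finset.card_empty]; omega
      · intro i _ p _ _ _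
        rw [hbocc, Finset.card_empty]; omega
      · intro i hi j j' _ hj'
        exact absurd (hstar0 i hi) (by omega)
      · intro i i' j _ _ hi' hj
        exact absurd (hstar0 i' hi') (by omega)
  refine ⟨hiff, ?_⟩
  intro c1 hc1 hinj1
  rw [Nat.card_eq_one_iff_unique]
  constructor
  · constructor
    rintro ⟨⟨c, T⟩, h, hnc, hnt, hag⟩ ⟨⟨c', T'⟩, h', hnc', hnt', hag'⟩
    dsimp only at h hnc hnt hag h' hnc' hnt' hag'
    have hT := ((hiff c T).1 h).2.2
    have hT' := ((hiff c' T').1 h').2.2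
    have hcc : c = c' := by
      funext i
      by_cases hf : frow star circ i
      · rw [hag i hf, hag' i hf]
      · rw [hnc i hf, hnc' i hf]
    apply Subtype.ext
    simp only [Prod.mk.injEq]
    refine ⟨hcc, ?_⟩
    funext i j
    by_cases hj : j < star i
    · rw [hT i j hj, hT' i j hj, hcc]
    · rw [hnt i j hj, hnt' i j hj]
  · refine ⟨⟨⟨fun i => if frow star circ i then c1 i else 0,
      fun i j => if j < star i then c1 i else 0⟩, ?_, ?_, ?_, ?_⟩⟩
    · rw [hiff]
      refine ⟨?_, ?_, ?_⟩
      · intro i hi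
        dsimp only
        rw [if_pos hi]; exact hc1 i hi
      · intro i i' hi hi' hcc
        dsimp only at hcc
        rw [if_pos hi, if_pos hi'] at hcc
        exact hinj1 i i' hi hi' hcc
      · intro i j hj
        dsimp only
        rw [if_pos hj, if_pos (hfrow i (by omega))]
    · intro i hi; dsimp only; rw [if_neg hi]
    · intro i j hj; dsimp only; rw [if_neg hj]
    · intro i hi; dsimp only; rw [if_pos hi]
end

section
/- The Bender–Knuth involution is well-defined: for any semi-standard Young tableau T and index i, there exists a semi-standard tableau T̃ of the same shape in which the numbers of entries equal to i and to i+1 are interchanged, and the map T ↦ T̃ is an involution; consequently the Kostka number K_{λμ} is invariant under transposing μ_i and μ_{i+1} in the content μ. -/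
open Finset

/-- The content of a semistandard Young tableau: the number of cells with entry `v`. -/
def tabContent (lam : YoungDiagram) (T : SemistandardYoungTableau lam) (v : ℕ) : ℕ :=
  (lam.cells.filter (fun c => T c.1 c.2 = v)).card

/-- The Kostka number `K_{lam, mu}` (for an arbitrary content function `mu`). -/
noncomputable def kostka (lam : YoungDiagram) (mu : ℕ → ℕ) : ℕ :=
  Nat.card {T : SemistandardYoungTableau lam // ∀ v, tabContent lam T v = mu v}

namespace BKaux

variable {lam : YoungDiagram}

/-- A downward-closed finset of naturals is an initial segment. -/
lemma lowerset_mem_iff {X : Finset ℕ} (h : ∀ ⦃c' c : ℕ⦄, c' ≤ c → c ∈ X → c' ∈ X) (m : ℕ) :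
    m ∈ X ↔ m < X.card := by
  constructor
  · intro hm
    have hsub : range (m + 1) ⊆ X := fun x hx => h (Nat.lt_succ_iff.mp (mem_range.mp hx)) hm
    simpa using card_le_card hsub
  · intro hm
    by_contra hmx
    have hsub : X ⊆ range m := by
      intro x hx
      rcases lt_or_ge x m with h' | h'
      · exact mem_range.mpr h'
      · exact absurd (h h' hx) hmx
    have := card_le_card hsub
    simp only [card_range] at this
    omega

lemma mem_of_entry_ne (T : SemistandardYoungTableau lam) {x y : ℕ} (h : T x y ≠ 0) :
    (x, y) ∈ lam := by
  by_contra hm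
  exact h (T.zeros hm)

/-! ### The five column sets of a row -/

def setA (i : ℕ) (T : SemistandardYoungTableau lam) (r : ℕ) : Finset ℕ :=
  (range (lam.rowLen r)).filter fun c => T r c < i

def setB (i : ℕ) (T : SemistandardYoungTableau lam) (r : ℕ) : Finset ℕ :=
  (range (lam.rowLen r)).filter fun c => T r c ≤ i

def setD (i : ℕ) (T : SemistandardYoungTableau lam) (r : ℕ) : Finset ℕ :=
  (range (lam.rowLen r)).filter fun c => T r c ≤ i + 1

def setS (i : ℕ) (T : SemistandardYoungTableau lam) (r : ℕ) : Finset ℕ :=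
  (range (lam.rowLen r)).filter fun c => T r c < i ∨ (T r c = i ∧ T (r + 1) c = i + 1)

def setE (i : ℕ) (T : SemistandardYoungTableau lam) (r : ℕ) : Finset ℕ :=
  (range (lam.rowLen r)).filter fun c => T r c ≤ i ∨ (T r c = i + 1 ∧ ¬ T (r - 1) c = i)

def aa (i : ℕ) (T : SemistandardYoungTableau lam) (r : ℕ) : ℕ := (setA i T r).card
def bb (i : ℕ) (T : SemistandardYoungTableau lam) (r : ℕ) : ℕ := (setB i T r).card
def dd (i : ℕ) (T : SemistandardYoungTableau lam) (r : ℕ) : ℕ := (setD i T r).card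
def ss (i : ℕ) (T : SemistandardYoungTableau lam) (r : ℕ) : ℕ := (setS i T r).card
def ee (i : ℕ) (T : SemistandardYoungTableau lam) (r : ℕ) : ℕ := (setE i T r).card

lemma mem_setA {i : ℕ} {T : SemistandardYoungTableau lam} {r c : ℕ} :
    c ∈ setA i T r ↔ c < lam.rowLen r ∧ T r c < i := by
  simp [setA]

lemma mem_setB {i : ℕ} {T : SemistandardYoungTableau lam} {r c : ℕ} :
    c ∈ setB i T r ↔ c < lam.rowLen r ∧ T r c ≤ i := by
  simp [setB]

lemma mem_setD {i : ℕ} {T : SemistandardYoungTableau lam} {r c : ℕ} :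
    c ∈ setD i T r ↔ c < lam.rowLen r ∧ T r c ≤ i + 1 := by
  simp [setD]

lemma mem_setS {i : ℕ} {T : SemistandardYoungTableau lam} {r c : ℕ} :
    c ∈ setS i T r ↔ c < lam.rowLen r ∧ (T r c < i ∨ (T r c = i ∧ T (r + 1) c = i + 1)) := by
  simp [setS]

lemma mem_setE {i : ℕ} {T : SemistandardYoungTableau lam} {r c : ℕ} :
    c ∈ setE i T r ↔ c < lam.rowLen r ∧ (T r c ≤ i ∨ (T r c = i + 1 ∧ ¬ T (r - 1) c = i)) := by
  simp [setE]

lemma cell_of_lt {r c : ℕ} (h : c < lam.rowLen r) : (r, c) ∈ lam :=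
  YoungDiagram.mem_iff_lt_rowLen.mpr h

/-! ### Downward closure -/

lemma setA_lower (i : ℕ) (T : SemistandardYoungTableau lam) (r : ℕ) :
    ∀ ⦃c' c : ℕ⦄, c' ≤ c → c ∈ setA i T r → c' ∈ setA i T r := by
  intro c' c hle hc
  rw [mem_setA] at *
  exact ⟨lt_of_le_of_lt hle hc.1, lt_of_le_of_lt (T.row_weak_of_le hle (cell_of_lt hc.1)) hc.2⟩

lemma setB_lower (i : ℕ) (T : SemistandardYoungTableau lam) (r : ℕ) :
    ∀ ⦃c' c : ℕ⦄, c' ≤ c → c ∈ setB i T r → c' ∈ setB i T r := by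
  intro c' c hle hc
  rw [mem_setB] at *
  exact ⟨lt_of_le_of_lt hle hc.1, le_trans (T.row_weak_of_le hle (cell_of_lt hc.1)) hc.2⟩

lemma setD_lower (i : ℕ) (T : SemistandardYoungTableau lam) (r : ℕ) :
    ∀ ⦃c' c : ℕ⦄, c' ≤ c → c ∈ setD i T r → c' ∈ setD i T r := by
  intro c' c hle hc
  rw [mem_setD] at *
  exact ⟨lt_of_le_of_lt hle hc.1, le_trans (T.row_weak_of_le hle (cell_of_lt hc.1)) hc.2⟩

lemma setS_lower (i : ℕ) (T : SemistandardYoungTableau lam) (r : ℕ) :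
    ∀ ⦃c' c : ℕ⦄, c' ≤ c → c ∈ setS i T r → c' ∈ setS i T r := by
  intro c' c hle hc
  rw [mem_setS] at *
  obtain ⟨hlen, hv⟩ := hc
  have hcell : (r, c) ∈ lam := cell_of_lt hlen
  refine ⟨lt_of_le_of_lt hle hlen, ?_⟩
  have hmono : T r c' ≤ T r c := T.row_weak_of_le hle hcell
  rcases hv with hv | ⟨hvi, hbel⟩
  · exact Or.inl (lt_of_le_of_lt hmono hv)
  · rcases Nat.lt_or_ge (T r c') i with h' | h'
    · exact Or.inl h'
    · have h'' : T r c' = i := by omega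
      have hcell1 : (r + 1, c) ∈ lam := mem_of_entry_ne T (by omega)
      have hcell1' : (r + 1, c') ∈ lam := lam.up_left_mem le_rfl hle hcell1
      have hup : T (r + 1) c' ≤ T (r + 1) c := T.row_weak_of_le hle hcell1
      have hdn : T r c' < T (r + 1) c' := T.col_strict (Nat.lt_succ_self r) hcell1'
      exact Or.inr ⟨h'', by omega⟩

lemma setE_lower (i : ℕ) (T : SemistandardYoungTableau lam) (r : ℕ) :
    ∀ ⦃c' c : ℕ⦄, c' ≤ c → c ∈ setE i T r → c' ∈ setE i T r := by
  intro c' c hle hc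
  rw [mem_setE] at *
  obtain ⟨hlen, hv⟩ := hc
  have hcell : (r, c) ∈ lam := cell_of_lt hlen
  refine ⟨lt_of_le_of_lt hle hlen, ?_⟩
  have hmono : T r c' ≤ T r c := T.row_weak_of_le hle hcell
  rcases hv with hv | ⟨hvi, habove⟩
  · exact Or.inl (le_trans hmono hv)
  · rcases Nat.lt_or_ge (T r c') (i + 1) with h' | h'
    · exact Or.inl (by omega)
    · have h'' : T r c' = i + 1 := by omega
      refine Or.inr ⟨h'', ?_⟩
      cases r with
      | zero => simpa [h''] using (by omega : ¬ (i + 1 = i))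
      | succ rr =>
        simp only [Nat.succ_sub_one] at habove ⊢
        intro hcon
        have hcellu : (rr, c) ∈ lam := lam.up_left_mem (Nat.le_succ rr) le_rfl hcell
        have h1 : T rr c' ≤ T rr c := T.row_weak_of_le hle hcellu
        have h2 : T rr c < T (rr + 1) c := T.col_strict (Nat.lt_succ_self rr) hcell
        omega

/-! ### Characterization lemmas -/

section chars
variable {i : ℕ} {T : SemistandardYoungTableau lam} {r c : ℕ}

lemma lt_aa_iff (hc : c < lam.rowLen r) : T r c < i ↔ c < aa i T r := by
  rw [aa, ← lowerset_mem_iff (setA_lower i T r), mem_setA]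
  tauto

lemma lt_bb_iff (hc : c < lam.rowLen r) : T r c ≤ i ↔ c < bb i T r := by
  rw [bb, ← lowerset_mem_iff (setB_lower i T r), mem_setB]
  tauto

lemma lt_dd_iff (hc : c < lam.rowLen r) : T r c ≤ i + 1 ↔ c < dd i T r := by
  rw [dd, ← lowerset_mem_iff (setD_lower i T r), mem_setD]
  tauto

lemma lt_ss_iff (hc : c < lam.rowLen r) :
    (T r c < i ∨ (T r c = i ∧ T (r + 1) c = i + 1)) ↔ c < ss i T r := by
  rw [ss, ← lowerset_mem_iff (setS_lower i T r), mem_setS]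
  tauto

lemma lt_ee_iff (hc : c < lam.rowLen r) :
    (T r c ≤ i ∨ (T r c = i + 1 ∧ ¬ T (r - 1) c = i)) ↔ c < ee i T r := by
  rw [ee, ← lowerset_mem_iff (setE_lower i T r), mem_setE]
  tauto

lemma eq_i_iff (hc : c < lam.rowLen r) :
    T r c = i ↔ (aa i T r ≤ c ∧ c < bb i T r) := by
  have h1 := lt_aa_iff (i := i) (T := T) hc
  have h2 := lt_bb_iff (i := i) (T := T) hc
  omega

lemma eq_i1_iff (hc : c < lam.rowLen r) :
    T r c = i + 1 ↔ (bb i T r ≤ c ∧ c < dd i T r) := by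
  have h1 := lt_bb_iff (i := i) (T := T) hc
  have h2 := lt_dd_iff (i := i) (T := T) hc
  omega

lemma locked_iff (hc : c < lam.rowLen r) :
    (T r c = i ∧ T (r + 1) c = i + 1) ↔ (aa i T r ≤ c ∧ c < ss i T r) := by
  have h1 := lt_aa_iff (i := i) (T := T) hc
  have h2 := lt_ss_iff (i := i) (T := T) hc
  omega

lemma freeI_iff (hc : c < lam.rowLen r) :
    (T r c = i ∧ ¬ T (r + 1) c = i + 1) ↔ (ss i T r ≤ c ∧ c < bb i T r) := by
  have h1 := lt_ss_iff (i := i) (T := T) hc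
  have h2 := lt_bb_iff (i := i) (T := T) hc
  have h3 := lt_aa_iff (i := i) (T := T) hc
  omega

lemma locked1_iff (hc : c < lam.rowLen r) :
    (T r c = i + 1 ∧ T (r - 1) c = i) ↔ (ee i T r ≤ c ∧ c < dd i T r) := by
  have h1 := lt_ee_iff (i := i) (T := T) hc
  have h2 := lt_dd_iff (i := i) (T := T) hc
  have h3 := lt_bb_iff (i := i) (T := T) hc
  omega

lemma freeI1_iff (hc : c < lam.rowLen r) :
    (T r c = i + 1 ∧ ¬ T (r - 1) c = i) ↔ (bb i T r ≤ c ∧ c < ee i T r) := by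
  have h1 := lt_ee_iff (i := i) (T := T) hc
  have h2 := lt_bb_iff (i := i) (T := T) hc
  omega

end chars

lemma le_chain (i : ℕ) (T : SemistandardYoungTableau lam) (r : ℕ) :
    aa i T r ≤ ss i T r ∧ ss i T r ≤ bb i T r ∧ bb i T r ≤ ee i T r ∧
      ee i T r ≤ dd i T r ∧ dd i T r ≤ lam.rowLen r := by
  refine ⟨card_le_card ?_, card_le_card ?_, card_le_card ?_, card_le_card ?_, ?_⟩
  · intro x hx; rw [mem_setA] at hx; rw [mem_setS]; exact ⟨hx.1, Or.inl hx.2⟩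
  · intro x hx; rw [mem_setS] at hx; rw [mem_setB]
    exact ⟨hx.1, by omega⟩
  · intro x hx; rw [mem_setB] at hx; rw [mem_setE]; exact ⟨hx.1, Or.inl hx.2⟩
  · intro x hx; rw [mem_setE] at hx; rw [mem_setD]
    exact ⟨hx.1, by omega⟩
  · calc (setD i T r).card ≤ (range (lam.rowLen r)).card := card_le_card (filter_subset _ _)
      _ = lam.rowLen r := card_range _

/-! ### The Bender–Knuth entry function -/

def bkEntry (i : ℕ) (T : SemistandardYoungTableau lam) (r c : ℕ) : ℕ :=
  if c < lam.rowLen r ∧ ss i T r ≤ c ∧ c < ee i T r then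
    (if c < ss i T r + (ee i T r - bb i T r) then i else i + 1)
  else T r c

lemma bkEntry_not_blk {i : ℕ} {T : SemistandardYoungTableau lam} {r c : ℕ}
    (h : ¬ (c < lam.rowLen r ∧ ss i T r ≤ c ∧ c < ee i T r)) :
    bkEntry i T r c = T r c := if_neg h

lemma bkEntry_blk {i : ℕ} {T : SemistandardYoungTableau lam} {r c : ℕ}
    (hc : c < lam.rowLen r) (h1 : ss i T r ≤ c) (h2 : c < ee i T r) :
    bkEntry i T r c = if c < ss i T r + (ee i T r - bb i T r) then i else i + 1 :=
  if_pos ⟨hc, h1, h2⟩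

lemma in_blk_val {i : ℕ} {T : SemistandardYoungTableau lam} {r c : ℕ}
    (hc : c < lam.rowLen r) (h1 : ss i T r ≤ c) (h2 : c < ee i T r) :
    i ≤ T r c ∧ T r c ≤ i + 1 := by
  have hs := lt_ss_iff (i := i) (T := T) hc
  have he := lt_ee_iff (i := i) (T := T) hc
  omega

lemma no_both {i : ℕ} {T : SemistandardYoungTableau lam} {r c : ℕ}
    (hcell : (r + 1, c) ∈ lam)
    (B1 : ss i T r ≤ c ∧ c < ee i T r) (B2 : ss i T (r + 1) ≤ c ∧ c < ee i T (r + 1)) :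
    False := by
  have hl1 : c < lam.rowLen (r + 1) := YoungDiagram.mem_iff_lt_rowLen.mp hcell
  have hl0 : c < lam.rowLen r := lt_of_lt_of_le hl1 (lam.rowLen_anti r (r + 1) (Nat.le_succ r))
  have hv1 := in_blk_val hl0 B1.1 B1.2
  have hv2 := in_blk_val hl1 B2.1 B2.2
  have hlt : T r c < T (r + 1) c := T.col_strict (Nat.lt_succ_self r) hcell
  have hTi : T r c = i := by omega
  have hTi1 : T (r + 1) c = i + 1 := by omega
  have := (locked_iff hl0).mp ⟨hTi, hTi1⟩
  omega

/-! ### BK preserves semistandardness -/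

lemma bk_lt_s {i : ℕ} {T : SemistandardYoungTableau lam} {r c : ℕ}
    (hc : c < lam.rowLen r) (h : c < ss i T r) :
    bkEntry i T r c = T r c ∧ T r c ≤ i := by
  have hch := le_chain i T r
  refine ⟨bkEntry_not_blk (by omega), ?_⟩
  have := lt_bb_iff (i := i) (T := T) hc
  omega

lemma bk_ge_e {i : ℕ} {T : SemistandardYoungTableau lam} {r c : ℕ}
    (hc : c < lam.rowLen r) (h : ee i T r ≤ c) :
    bkEntry i T r c = T r c ∧ i + 1 ≤ T r c := by
  have hch := le_chain i T r
  refine ⟨bkEntry_not_blk (by omega), ?_⟩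
  have := lt_bb_iff (i := i) (T := T) hc
  omega

lemma bk_row_weak {i : ℕ} (T : SemistandardYoungTableau lam) {r j1 j2 : ℕ}
    (hj : j1 < j2) (hcell : (r, j2) ∈ lam) :
    bkEntry i T r j1 ≤ bkEntry i T r j2 := by
  have hl2 : j2 < lam.rowLen r := YoungDiagram.mem_iff_lt_rowLen.mp hcell
  have hl1 : j1 < lam.rowLen r := lt_trans hj hl2
  have hch := le_chain i T r
  rcases lt_or_ge j2 (ss i T r) with h2 | h2
  · obtain ⟨e1, _⟩ := bk_lt_s hl1 (lt_trans hj h2)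
    obtain ⟨e2, _⟩ := bk_lt_s hl2 h2
    rw [e1, e2]
    exact T.row_weak hj hcell
  · rcases lt_or_ge j2 (ee i T r) with h2' | h2'
    · rcases lt_or_ge j1 (ss i T r) with h1 | h1
      · obtain ⟨e1, hv1⟩ := bk_lt_s hl1 h1
        rw [e1, bkEntry_blk hl2 h2 h2']
        split_ifs <;> omega
      · rw [bkEntry_blk hl1 h1 (lt_trans hj h2'), bkEntry_blk hl2 h2 h2']
        split_ifs <;> omega
    · obtain ⟨e2, hv2⟩ := bk_ge_e hl2 h2'
      rcases lt_or_ge j1 (ss i T r) with h1 | h1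
      · obtain ⟨e1, hv1⟩ := bk_lt_s hl1 h1
        rw [e1, e2]
        exact T.row_weak hj hcell
      · rcases lt_or_ge j1 (ee i T r) with h1' | h1'
        · rw [bkEntry_blk hl1 h1 h1', e2]
          split_ifs <;> omega
        · obtain ⟨e1, _⟩ := bk_ge_e hl1 h1'
          rw [e1, e2]
          exact T.row_weak hj hcell

lemma bk_col_adj {i : ℕ} (T : SemistandardYoungTableau lam) {r c : ℕ}
    (hcell : (r + 1, c) ∈ lam) :
    bkEntry i T r c < bkEntry i T (r + 1) c := by
  have hl1 : c < lam.rowLen (r + 1) := YoungDiagram.mem_iff_lt_rowLen.mp hcell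
  have hl0 : c < lam.rowLen r := lt_of_lt_of_le hl1 (lam.rowLen_anti r (r + 1) (Nat.le_succ r))
  have hlt : T r c < T (r + 1) c := T.col_strict (Nat.lt_succ_self r) hcell
  by_cases B1 : ss i T r ≤ c ∧ c < ee i T r
  · by_cases B2 : ss i T (r + 1) ≤ c ∧ c < ee i T (r + 1)
    · exact absurd (no_both hcell B1 B2) (fun h => h)
    · have h2 : bkEntry i T (r + 1) c = T (r + 1) c := bkEntry_not_blk (by tauto)
      have hv := in_blk_val hl0 B1.1 B1.2
      rw [bkEntry_blk hl0 B1.1 B1.2, h2]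
      split_ifs with h
      · omega
      · by_contra hcon
        push_neg at hcon
        have hTi1 : T (r + 1) c = i + 1 := by omega
        have hTi : T r c = i := by omega
        have := (locked_iff hl0).mp ⟨hTi, hTi1⟩
        omega
  · have h1 : bkEntry i T r c = T r c := bkEntry_not_blk (by tauto)
    by_cases B2 : ss i T (r + 1) ≤ c ∧ c < ee i T (r + 1)
    · have hv2 := in_blk_val hl1 B2.1 B2.2
      rw [h1, bkEntry_blk hl1 B2.1 B2.2]
      split_ifs with h
      · by_contra hcon
        push_neg at hcon
        have hTi : T r c = i := by omega
        have hTi1 : T (r + 1) c = i + 1 := by omega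
        have hlk1 := (locked1_iff (r := r + 1) hl1).mp ⟨hTi1, by simpa using hTi⟩
        omega
      · omega
    · have h2 : bkEntry i T (r + 1) c = T (r + 1) c := bkEntry_not_blk (by tauto)
      rw [h1, h2]
      exact hlt

lemma bk_col {i : ℕ} (T : SemistandardYoungTableau lam) :
    ∀ r2 r1 j : ℕ, r1 < r2 → (r2, j) ∈ lam → bkEntry i T r1 j < bkEntry i T r2 j := by
  intro r2
  induction r2 with
  | zero => intro r1 j h _; omega
  | succ n ih =>
    intro r1 j h hcell
    rcases Nat.lt_succ_iff_lt_or_eq.mp h with h' | h'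
    · have hcell' : (n, j) ∈ lam := lam.up_left_mem (Nat.le_succ n) le_rfl hcell
      exact lt_trans (ih r1 j h' hcell') (bk_col_adj T hcell)
    · subst h'
      exact bk_col_adj T hcell

def bkT (i : ℕ) (T : SemistandardYoungTableau lam) : SemistandardYoungTableau lam where
  entry := bkEntry i T
  row_weak' := fun hj hcell => bk_row_weak T hj hcell
  col_strict' := fun h hcell => bk_col T _ _ _ h hcell
  zeros' := by
    intro r c h
    have hlen : ¬ c < lam.rowLen r := fun hh => h (cell_of_lt hh)
    rw [bkEntry_not_blk (by tauto)]
    exact T.zeros h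

lemma bkT_apply (i : ℕ) (T : SemistandardYoungTableau lam) (r c : ℕ) :
    bkT i T r c = bkEntry i T r c := rfl

/-! ### The key pair-preservation lemma -/

lemma bk_pair {i : ℕ} (T : SemistandardYoungTableau lam) (r c : ℕ) (hc : c < lam.rowLen r) :
    (bkT i T r c = i ∧ bkT i T (r + 1) c = i + 1) ↔ (T r c = i ∧ T (r + 1) c = i + 1) := by
  rw [bkT_apply, bkT_apply]
  constructor
  · rintro ⟨h1, h2⟩
    have hl1 : c < lam.rowLen (r + 1) := by
      by_contra h
      have hnm : (r + 1, c) ∉ lam := fun hm => h (YoungDiagram.mem_iff_lt_rowLen.mp hm)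
      rw [bkEntry_not_blk (by tauto), T.zeros hnm] at h2
      omega
    have hch := le_chain i T r
    have hch1 := le_chain i T (r + 1)
    by_cases B1 : ss i T r ≤ c ∧ c < ee i T r
    · exfalso
      by_cases B2 : ss i T (r + 1) ≤ c ∧ c < ee i T (r + 1)
      · exact no_both (cell_of_lt hl1) B1 B2
      · have hT1 : T (r + 1) c = i + 1 := by rw [← bkEntry_not_blk (by tauto)]; exact h2
        have hb := (eq_i1_iff hl1).mp hT1
        have hce : ee i T (r + 1) ≤ c := by omega
        have hlk1 := (locked1_iff (r := r + 1) hl1).mpr ⟨hce, hb.2⟩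
        have hT0 : T r c = i := by simpa using hlk1.2
        have := (locked_iff hc).mp ⟨hT0, hT1⟩
        omega
    · have hT0 : T r c = i := by rw [← bkEntry_not_blk (by tauto)]; exact h1
      refine ⟨hT0, ?_⟩
      by_cases B2 : ss i T (r + 1) ≤ c ∧ c < ee i T (r + 1)
      · have hb := (eq_i_iff hc).mp hT0
        have hsc : c < ss i T r := by omega
        exact ((locked_iff hc).mpr ⟨hb.1, hsc⟩).2
      · rw [← bkEntry_not_blk (by tauto)]; exact h2
  · rintro ⟨h1, h2⟩
    have hcell1 : (r + 1, c) ∈ lam := mem_of_entry_ne T (by omega)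
    have hl1 : c < lam.rowLen (r + 1) := YoungDiagram.mem_iff_lt_rowLen.mp hcell1
    have hlk := (locked_iff hc).mp ⟨h1, h2⟩
    have hlk1 := (locked1_iff (r := r + 1) hl1).mp ⟨h2, by simpa using h1⟩
    constructor
    · rw [bkEntry_not_blk (by omega)]; exact h1
    · rw [bkEntry_not_blk (by omega)]; exact h2

/-! ### Parameters of `bkT` -/

section params
variable {i : ℕ} (T : SemistandardYoungTableau lam) (r : ℕ)

lemma bk_lt_i_iff {c : ℕ} (hc : c < lam.rowLen r) :
    bkT i T r c < i ↔ T r c < i := by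
  rw [bkT_apply]
  by_cases B : ss i T r ≤ c ∧ c < ee i T r
  · have hv := in_blk_val hc B.1 B.2
    rw [bkEntry_blk hc B.1 B.2]
    split_ifs <;> omega
  · rw [bkEntry_not_blk (by tauto)]

lemma bk_le_i1_iff {c : ℕ} (hc : c < lam.rowLen r) :
    bkT i T r c ≤ i + 1 ↔ T r c ≤ i + 1 := by
  rw [bkT_apply]
  by_cases B : ss i T r ≤ c ∧ c < ee i T r
  · have hv := in_blk_val hc B.1 B.2
    rw [bkEntry_blk hc B.1 B.2]
    split_ifs <;> omega
  · rw [bkEntry_not_blk (by tauto)]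

lemma setA_bk : setA i (bkT i T) r = setA i T r := by
  ext c
  simp only [mem_setA]
  exact and_congr_right fun hc => bk_lt_i_iff T r hc

lemma aa_bk : aa i (bkT i T) r = aa i T r := by rw [aa, setA_bk, aa]

lemma setD_bk : setD i (bkT i T) r = setD i T r := by
  ext c
  simp only [mem_setD]
  exact and_congr_right fun hc => bk_le_i1_iff T r hc

lemma dd_bk : dd i (bkT i T) r = dd i T r := by rw [dd, setD_bk, dd]

lemma setS_bk : setS i (bkT i T) r = setS i T r := by
  ext c
  simp only [mem_setS]
  refine and_congr_right fun hc => or_congr (bk_lt_i_iff T r hc) (bk_pair T r c hc)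

lemma ss_bk : ss i (bkT i T) r = ss i T r := by rw [ss, setS_bk, ss]

lemma bk_locked1_iff {c : ℕ} (hc : c < lam.rowLen r) :
    (bkT i T r c = i + 1 ∧ bkT i T (r - 1) c = i) ↔ (T r c = i + 1 ∧ T (r - 1) c = i) := by
  cases r with
  | zero =>
    simp only [Nat.zero_sub]
    omega
  | succ rr =>
    simp only [Nat.succ_sub_one]
    have hc' : c < lam.rowLen rr :=
      lt_of_lt_of_le hc (lam.rowLen_anti rr (rr + 1) (Nat.le_succ rr))
    have := bk_pair (i := i) T rr c hc'
    tauto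

lemma setE_bk : setE i (bkT i T) r = setE i T r := by
  ext c
  simp only [mem_setE]
  refine and_congr_right fun hc => ?_
  have h1 := bk_le_i1_iff (i := i) T r hc
  have h2 := bk_locked1_iff (i := i) T r hc
  omega

lemma ee_bk : ee i (bkT i T) r = ee i T r := by rw [ee, setE_bk, ee]

lemma setB_bk : setB i (bkT i T) r = range (ss i T r + (ee i T r - bb i T r)) := by
  have hch := le_chain i T r
  ext c
  simp only [mem_setB, mem_range]
  constructor
  · rintro ⟨hc, hle⟩
    by_cases B : ss i T r ≤ c ∧ c < ee i T r
    · rw [bkT_apply, bkEntry_blk hc B.1 B.2] at hle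
      split_ifs at hle with h
      · exact h
      · omega
    · rw [bkT_apply, bkEntry_not_blk (by tauto)] at hle
      have hb := (lt_bb_iff (i := i) (T := T) hc).mp hle
      omega
  · intro hlt
    have hce : c < ee i T r := by omega
    have hc : c < lam.rowLen r := by omega
    refine ⟨hc, ?_⟩
    by_cases hcs : ss i T r ≤ c
    · rw [bkT_apply, bkEntry_blk hc hcs hce, if_pos hlt]
    · push_neg at hcs
      rw [bkT_apply, bkEntry_not_blk (by omega)]
      exact (lt_bb_iff (i := i) (T := T) hc).mpr (by omega)

lemma bb_bk : bb i (bkT i T) r = ss i T r + (ee i T r - bb i T r) := by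
  rw [bb, setB_bk, card_range]

end params

/-! ### Involution -/

theorem bk_bk (i : ℕ) (T : SemistandardYoungTableau lam) : bkT i (bkT i T) = T := by
  ext r c
  show bkEntry i (bkT i T) r c = T r c
  by_cases hc : c < lam.rowLen r
  · have hch := le_chain i T r
    by_cases B : ss i T r ≤ c ∧ c < ee i T r
    · have h1 : bkEntry i (bkT i T) r c =
          if c < ss i (bkT i T) r + (ee i (bkT i T) r - bb i (bkT i T) r) then i else i + 1 :=
        bkEntry_blk hc (by rw [ss_bk]; exact B.1) (by rw [ee_bk]; exact B.2)
      rw [h1, ss_bk, ee_bk, bb_bk]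
      have harith : ss i T r + (ee i T r - (ss i T r + (ee i T r - bb i T r))) = bb i T r := by
        omega
      rw [harith]
      have hval := in_blk_val hc B.1 B.2
      have hbiff := lt_bb_iff (i := i) (T := T) hc
      split_ifs with h <;> omega
    · have h1 : bkEntry i (bkT i T) r c = bkT i T r c := by
        apply bkEntry_not_blk
        rw [ss_bk, ee_bk]
        tauto
      rw [h1, bkT_apply, bkEntry_not_blk (by tauto)]
  · have h1 : bkEntry i (bkT i T) r c = bkT i T r c := bkEntry_not_blk (by tauto)
    rw [h1, bkT_apply, bkEntry_not_blk (by tauto)]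

/-! ### Content -/

def Lset (i : ℕ) (T : SemistandardYoungTableau lam) : Finset (ℕ × ℕ) :=
  lam.cells.filter fun p => T p.1 p.2 = i ∧ T (p.1 + 1) p.2 = i + 1

def Fset (i : ℕ) (T : SemistandardYoungTableau lam) : Finset (ℕ × ℕ) :=
  lam.cells.filter fun p => T p.1 p.2 = i ∧ ¬ T (p.1 + 1) p.2 = i + 1

def L1set (i : ℕ) (T : SemistandardYoungTableau lam) : Finset (ℕ × ℕ) :=
  lam.cells.filter fun p => T p.1 p.2 = i + 1 ∧ T (p.1 - 1) p.2 = i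

def F1set (i : ℕ) (T : SemistandardYoungTableau lam) : Finset (ℕ × ℕ) :=
  lam.cells.filter fun p => T p.1 p.2 = i + 1 ∧ ¬ T (p.1 - 1) p.2 = i

lemma content_eq_L_add_F (i : ℕ) (T : SemistandardYoungTableau lam) :
    tabContent lam T i = (Lset i T).card + (Fset i T).card := by
  rw [tabContent, Lset, Fset]
  rw [← card_filter_add_card_filter_not
    (s := lam.cells.filter fun p => T p.1 p.2 = i) (p := fun p => T (p.1 + 1) p.2 = i + 1)]
  congr 1 <;> rw [filter_filter]

lemma content_eq_L1_add_F1 (i : ℕ) (T : SemistandardYoungTableau lam) :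
    tabContent lam T (i + 1) = (L1set i T).card + (F1set i T).card := by
  rw [tabContent, L1set, F1set]
  rw [← card_filter_add_card_filter_not
    (s := lam.cells.filter fun p => T p.1 p.2 = i + 1) (p := fun p => T (p.1 - 1) p.2 = i)]
  congr 1 <;> rw [filter_filter]

lemma card_L_eq_L1 (i : ℕ) (T : SemistandardYoungTableau lam) :
    (Lset i T).card = (L1set i T).card := by
  apply card_bij (fun p _ => (p.1 + 1, p.2))
  · rintro ⟨r, c⟩ hp
    simp only [Lset, mem_filter, YoungDiagram.mem_cells] at hp
    obtain ⟨hmem, h1, h2⟩ := hp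
    simp only [L1set, mem_filter, YoungDiagram.mem_cells]
    refine ⟨mem_of_entry_ne T (by omega), h2, by simpa using h1⟩
  · rintro ⟨r1, c1⟩ h1 ⟨r2, c2⟩ h2 heq
    simp only [Prod.mk.injEq] at heq ⊢
    omega
  · rintro ⟨r, c⟩ hq
    simp only [L1set, mem_filter, YoungDiagram.mem_cells] at hq
    obtain ⟨hmem, h1, h2⟩ := hq
    cases r with
    | zero => simp only [Nat.zero_sub] at h2; omega
    | succ rr =>
      refine ⟨(rr, c), ?_, ?_⟩
      · simp only [Lset, mem_filter, YoungDiagram.mem_cells]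
        simp only [Nat.succ_sub_one] at h2
        exact ⟨lam.up_left_mem (Nat.le_succ rr) le_rfl hmem, h2, h1⟩
      · rfl

lemma Fset_eq (i : ℕ) (T : SemistandardYoungTableau lam) :
    Fset i T = lam.cells.filter fun p => ss i T p.1 ≤ p.2 ∧ p.2 < bb i T p.1 := by
  ext ⟨r, c⟩
  simp only [Fset, mem_filter, YoungDiagram.mem_cells]
  refine and_congr_right fun hp => ?_
  exact freeI_iff (YoungDiagram.mem_iff_lt_rowLen.mp hp)

lemma F1set_eq (i : ℕ) (T : SemistandardYoungTableau lam) :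
    F1set i T = lam.cells.filter fun p => bb i T p.1 ≤ p.2 ∧ p.2 < ee i T p.1 := by
  ext ⟨r, c⟩
  simp only [F1set, mem_filter, YoungDiagram.mem_cells]
  refine and_congr_right fun hp => ?_
  exact freeI1_iff (YoungDiagram.mem_iff_lt_rowLen.mp hp)

lemma Fset_bk (i : ℕ) (T : SemistandardYoungTableau lam) :
    Fset i (bkT i T) =
      lam.cells.filter fun p => ss i T p.1 ≤ p.2 ∧ p.2 < ss i T p.1 + (ee i T p.1 - bb i T p.1) := by
  rw [Fset_eq]
  apply filter_congr
  intro p _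
  simp only [ss_bk, bb_bk]

lemma F1set_bk (i : ℕ) (T : SemistandardYoungTableau lam) :
    F1set i (bkT i T) =
      lam.cells.filter fun p => ss i T p.1 + (ee i T p.1 - bb i T p.1) ≤ p.2 ∧ p.2 < ee i T p.1 := by
  rw [F1set_eq]
  apply filter_congr
  intro p _
  simp only [ss_bk, bb_bk, ee_bk]

lemma card_shift1 (i : ℕ) (T : SemistandardYoungTableau lam) :
    (lam.cells.filter fun p =>
        ss i T p.1 ≤ p.2 ∧ p.2 < ss i T p.1 + (ee i T p.1 - bb i T p.1)).card =
      (lam.cells.filter fun p => bb i T p.1 ≤ p.2 ∧ p.2 < ee i T p.1).card := by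
  apply card_bij (fun p _ => (p.1, p.2 - ss i T p.1 + bb i T p.1))
  · rintro ⟨r, c⟩ hp
    simp only [mem_filter, YoungDiagram.mem_cells] at hp
    obtain ⟨hmem, hge, hlt⟩ := hp
    have hch := le_chain i T r
    simp only [mem_filter, YoungDiagram.mem_cells]
    refine ⟨YoungDiagram.mem_iff_lt_rowLen.mpr (by omega), by omega, by omega⟩
  · rintro ⟨r1, c1⟩ h1 ⟨r2, c2⟩ h2 heq
    simp only [mem_filter, YoungDiagram.mem_cells] at h1 h2
    simp only [Prod.mk.injEq] at heq ⊢
    obtain ⟨hr, hcc⟩ := heq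
    subst hr
    exact ⟨by trivial, by omega⟩
  · rintro ⟨r, c⟩ hq
    simp only [mem_filter, YoungDiagram.mem_cells] at hq
    obtain ⟨hmem, hge, hlt⟩ := hq
    have hch := le_chain i T r
    refine ⟨(r, c - bb i T r + ss i T r), ?_, ?_⟩
    · simp only [mem_filter, YoungDiagram.mem_cells]
      refine ⟨YoungDiagram.mem_iff_lt_rowLen.mpr (by omega), by omega, by omega⟩
    · simp only [Prod.mk.injEq]
      exact ⟨by trivial, by omega⟩

lemma card_shift2 (i : ℕ) (T : SemistandardYoungTableau lam) :
    (lam.cells.filter fun p =>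
        ss i T p.1 + (ee i T p.1 - bb i T p.1) ≤ p.2 ∧ p.2 < ee i T p.1).card =
      (lam.cells.filter fun p => ss i T p.1 ≤ p.2 ∧ p.2 < bb i T p.1).card := by
  apply card_bij (fun p _ => (p.1, p.2 - (ee i T p.1 - bb i T p.1)))
  · rintro ⟨r, c⟩ hp
    simp only [mem_filter, YoungDiagram.mem_cells] at hp
    obtain ⟨hmem, hge, hlt⟩ := hp
    have hch := le_chain i T r
    simp only [mem_filter, YoungDiagram.mem_cells]
    refine ⟨YoungDiagram.mem_iff_lt_rowLen.mpr (by omega), by omega, by omega⟩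
  · rintro ⟨r1, c1⟩ h1 ⟨r2, c2⟩ h2 heq
    simp only [mem_filter, YoungDiagram.mem_cells] at h1 h2
    simp only [Prod.mk.injEq] at heq ⊢
    obtain ⟨hr, hcc⟩ := heq
    subst hr
    exact ⟨by trivial, by omega⟩
  · rintro ⟨r, c⟩ hq
    simp only [mem_filter, YoungDiagram.mem_cells] at hq
    obtain ⟨hmem, hge, hlt⟩ := hq
    have hch := le_chain i T r
    refine ⟨(r, c + (ee i T r - bb i T r)), ?_, ?_⟩
    · simp only [mem_filter, YoungDiagram.mem_cells]
      refine ⟨YoungDiagram.mem_iff_lt_rowLen.mpr (by omega), by omega, by omega⟩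
    · simp only [Prod.mk.injEq]
      exact ⟨by trivial, by omega⟩

lemma Lset_bk (i : ℕ) (T : SemistandardYoungTableau lam) :
    Lset i (bkT i T) = Lset i T := by
  ext ⟨r, c⟩
  simp only [Lset, mem_filter, YoungDiagram.mem_cells]
  exact and_congr_right fun hp => bk_pair T r c (YoungDiagram.mem_iff_lt_rowLen.mp hp)

lemma L1set_bk (i : ℕ) (T : SemistandardYoungTableau lam) :
    L1set i (bkT i T) = L1set i T := by
  ext ⟨r, c⟩
  simp only [L1set, mem_filter, YoungDiagram.mem_cells]
  refine and_congr_right fun hp => ?_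
  exact bk_locked1_iff (i := i) T r (YoungDiagram.mem_iff_lt_rowLen.mp hp)

lemma content_bk_i (i : ℕ) (T : SemistandardYoungTableau lam) :
    tabContent lam (bkT i T) i = tabContent lam T (i + 1) := by
  rw [content_eq_L_add_F i (bkT i T), content_eq_L1_add_F1 i T]
  rw [Lset_bk, card_L_eq_L1]
  congr 1
  rw [Fset_bk, F1set_eq]
  exact card_shift1 i T

lemma content_bk_i1 (i : ℕ) (T : SemistandardYoungTableau lam) :
    tabContent lam (bkT i T) (i + 1) = tabContent lam T i := by
  rw [content_eq_L1_add_F1 i (bkT i T), content_eq_L_add_F i T]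
  rw [L1set_bk, ← card_L_eq_L1]
  congr 1
  rw [F1set_bk, Fset_eq]
  exact card_shift2 i T

lemma content_bk_other (i : ℕ) (T : SemistandardYoungTableau lam) (v : ℕ)
    (hv1 : v ≠ i) (hv2 : v ≠ i + 1) :
    tabContent lam (bkT i T) v = tabContent lam T v := by
  rw [tabContent, tabContent]
  congr 1
  apply filter_congr
  rintro ⟨r, c⟩ hp
  rw [YoungDiagram.mem_cells] at hp
  have hc : c < lam.rowLen r := YoungDiagram.mem_iff_lt_rowLen.mp hp
  simp only
  by_cases B : ss i T r ≤ c ∧ c < ee i T r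
  · have hval := in_blk_val hc B.1 B.2
    rw [bkT_apply, bkEntry_blk hc B.1 B.2]
    split_ifs <;> omega
  · rw [bkT_apply, bkEntry_not_blk (by tauto)]

end BKaux

/-- The Bender–Knuth involution is well defined: for each index `i` there is a map on
semistandard Young tableaux of shape `lam` interchanging the number of entries equal to `i`
and to `i+1` (leaving the other multiplicities unchanged), which is an involution; consequently
the Kostka number `K_{λμ}` is invariant under transposing `μ_i` and `μ_{i+1}`. -/
theorem bender_knuth (lam : YoungDiagram) (i : ℕ) :
    ∃ BK : SemistandardYoungTableau lam → SemistandardYoungTableau lam,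
      (∀ T, tabContent lam (BK T) i = tabContent lam T (i + 1) ∧
            tabContent lam (BK T) (i + 1) = tabContent lam T i ∧
            ∀ v, v ≠ i → v ≠ i + 1 → tabContent lam (BK T) v = tabContent lam T v) ∧
      (∀ T, BK (BK T) = T) ∧
      (∀ mu : ℕ → ℕ, kostka lam (fun v => mu (Equiv.swap i (i + 1) v)) = kostka lam mu) := by
  refine ⟨BKaux.bkT i, fun T => ⟨BKaux.content_bk_i i T, BKaux.content_bk_i1 i T,
    fun v hv1 hv2 => BKaux.content_bk_other i T v hv1 hv2⟩, BKaux.bk_bk i, ?_⟩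
  intro mu
  have e : {T : SemistandardYoungTableau lam //
        ∀ v, tabContent lam T v = mu (Equiv.swap i (i + 1) v)} ≃
      {T : SemistandardYoungTableau lam // ∀ v, tabContent lam T v = mu v} :=
    { toFun := fun T => ⟨BKaux.bkT i T.1, by
        obtain ⟨T, hT⟩ := T
        intro v
        by_cases hv : v = i
        · rw [hv, BKaux.content_bk_i i T, hT (i + 1), Equiv.swap_apply_right]
        · by_cases hv2 : v = i + 1
          · rw [hv2, BKaux.content_bk_i1 i T, hT i, Equiv.swap_apply_left]
          · rw [BKaux.content_bk_other i T v hv hv2, hT v,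
              Equiv.swap_apply_of_ne_of_ne hv hv2]⟩
      invFun := fun T => ⟨BKaux.bkT i T.1, by
        obtain ⟨T, hT⟩ := T
        intro v
        by_cases hv : v = i
        · rw [hv, BKaux.content_bk_i i T, hT (i + 1), Equiv.swap_apply_left]
        · by_cases hv2 : v = i + 1
          · rw [hv2, BKaux.content_bk_i1 i T, hT i, Equiv.swap_apply_right]
          · rw [BKaux.content_bk_other i T v hv hv2, hT v,
              Equiv.swap_apply_of_ne_of_ne hv hv2]⟩
      left_inv := fun T => Subtype.ext (BKaux.bk_bk i T.1)
      right_inv := fun T => Subtype.ext (BKaux.bk_bk i T.1) }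
  exact Nat.card_congr e
end
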